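/- arXiv:math/0201109 — 9 statements merged into one kernel-verified Lean document; each statement's English description precedes it below -/
import Mathlib

section
/- Let p_1, …, p_n ∈ [0, 1). For a nonempty subset s ⊆ {1, …, n} write p_s = ∏_{i ∈ s} p_i. Then ∑_{k=1}^∞ (1 − ∏_{i=1}^n (1 − p_i^k)) = ∑_{∅ ≠ s ⊆ {1,…,n}} (−1)^{|s|−1} (1/(1 − p_s) − 1), and in particular the series on the left converges. -/
/-!
Expanding the product by inclusion–exclusion, the `k`-th term is
`∑_{s ≠ ∅} (-1)^(|s|-1) p_s^k`. Each `p_s` lies in `[0, 1)`, so summing over `k ≥ 1`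
gives the geometric series `∑_k p_s^k = 1/(1 - p_s) - 1`, and a finite sum of convergent
series may be summed termwise.
-/

open Finset

theorem Finset.one_sub_prod_one_sub {ι R : Type*} [CommRing R] [DecidableEq ι]
    (s : Finset ι) (x : ι → R) :
    1 - ∏ i ∈ s, (1 - x i) =
      ∑ t ∈ s.powerset.filter (fun t => t ≠ ∅), (-1) ^ (#t - 1) * ∏ i ∈ t, x i := by
  have hexpand : ∏ i ∈ s, (1 - x i) = ∑ t ∈ s.powerset, (-1) ^ #t * ∏ i ∈ t, x i := by
    simp only [sub_eq_add_neg, prod_one_add, prod_neg]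
  rw [filter_ne', hexpand]
  have hsign : ∀ t ∈ s.powerset.erase ∅,
      (-1 : R) ^ (#t - 1) * ∏ i ∈ t, x i = -((-1) ^ #t * ∏ i ∈ t, x i) := by
    intro t ht
    obtain ⟨m, hm⟩ := Nat.exists_eq_add_one.mpr (card_pos.mpr (nonempty_iff_ne_empty.mpr
      (ne_of_mem_erase ht)))
    rw [hm, Nat.add_sub_cancel, pow_succ]
    ring
  rw [sum_congr rfl hsign, sum_neg_distrib, sum_erase_eq_sub (empty_mem_powerset s)]
  simp

theorem Finset.prod_lt_one_of_nonempty {ι R : Type*} [CommMonoidWithZero R] [PartialOrder R]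
    [ZeroLEOneClass R] [PosMulMono R] {s : Finset ι} {f : ι → R} (hs : s.Nonempty)
    (h0 : ∀ i ∈ s, 0 ≤ f i) (h1 : ∀ i ∈ s, f i < 1) : ∏ i ∈ s, f i < 1 := by
  classical
  obtain ⟨i, hi⟩ := hs
  rw [← mul_prod_erase s f hi]
  exact mul_lt_one_of_nonneg_of_lt_one_left (h0 i hi) (h1 i hi)
    (prod_le_one (fun j hj => h0 j (mem_of_mem_erase hj))
      fun j hj => (h1 j (mem_of_mem_erase hj)).le)

theorem hasSum_pow_succ_geometric {r : ℝ} (hr : |r| < 1) :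
    HasSum (fun k : ℕ => r ^ (k + 1)) (1 / (1 - r) - 1) := by
  simpa [one_div] using (hasSum_nat_add_iff' 1).mpr (hasSum_geometric_of_abs_lt_one hr)

/-- For `p 1, …, p n ∈ [0,1)`,
`∑_{k=1}^∞ (1 - ∏ i (1 - p i ^ k))
  = ∑_{∅ ≠ s ⊆ {1,…,n}} (-1)^(|s|-1) (1/(1 - p_s) - 1)`,
where `p_s = ∏_{i ∈ s} p i`; in particular the series converges. -/
theorem stmt_2 (n : ℕ) (p : Fin n → ℝ) (hp : ∀ i, p i ∈ Set.Ico (0 : ℝ) 1) :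
    HasSum (fun k : ℕ => 1 - ∏ i : Fin n, (1 - p i ^ (k + 1)))
      (∑ s ∈ (univ : Finset (Fin n)).powerset.filter (fun s => s ≠ ∅),
        (-1 : ℝ) ^ (s.card - 1) * (1 / (1 - ∏ i ∈ s, p i) - 1)) := by
  have hgeom : ∀ s ∈ (univ : Finset (Fin n)).powerset.filter (fun s => s ≠ ∅),
      HasSum (fun k : ℕ => (-1 : ℝ) ^ (s.card - 1) * (∏ i ∈ s, p i) ^ (k + 1))
        ((-1 : ℝ) ^ (s.card - 1) * (1 / (1 - ∏ i ∈ s, p i) - 1)) := by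
    intro s hs
    have hne : s.Nonempty := nonempty_iff_ne_empty.mpr (mem_filter.mp hs).2
    have h0 : 0 ≤ ∏ i ∈ s, p i := prod_nonneg fun i _ => (hp i).1
    have h1 : ∏ i ∈ s, p i < 1 :=
      prod_lt_one_of_nonempty hne (fun i _ => (hp i).1) fun i _ => (hp i).2
    exact (hasSum_pow_succ_geometric (abs_lt.mpr ⟨by linarith, h1⟩)).mul_left _
  convert hasSum_sum hgeom using 2 with k
  rw [one_sub_prod_one_sub]
  simp only [prod_pow]
end

section
/- Let μ be a probability measure on [0,1] with density f with respect to Lebesgue measure, and suppose there are constants c > 0, β ≥ 0, δ > 0 and C > 0 such that |f(1 − x) − c x^β| ≤ C x^{β+δ} for all x ∈ (0, 1]. Then the moments m_k = ∫_0^1 x^k f(x) dx satisfy lim_{k→∞} k^{1+β} m_k = c Γ(β + 1), i.e. m_k is asymptotic to c Γ(β+1) k^{−(1+β)}. -/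
open MeasureTheory Filter
open scoped Topology Nat

lemma beta_eval (s : ℝ) (hs : 0 < s) (k : ℕ) :
    ∫ t in (0:ℝ)..1, (1 - t) ^ k * t ^ (s - 1) =
      (k ! : ℝ) / ∏ j ∈ Finset.range (k + 1), (s + j) := by
  have hre : 0 < Complex.re (s : ℂ) := by simpa using hs
  have h0 := Complex.betaIntegral_eval_nat_add_one_right hre k
  have h1 : Complex.betaIntegral (s : ℂ) (k + 1)
      = ((∫ t in (0:ℝ)..1, (1 - t) ^ k * t ^ (s - 1) : ℝ) : ℂ) := by
    rw [Complex.betaIntegral, ← intervalIntegral.integral_ofReal]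
    refine intervalIntegral.integral_congr fun x hx => ?_
    rw [Set.uIcc_of_le (zero_le_one)] at hx
    have hx0 : (0:ℝ) ≤ x := hx.1
    have e1 : ((x:ℂ)) ^ ((s:ℂ) - 1) = ((x ^ (s - 1) : ℝ) : ℂ) := by
      rw [Complex.ofReal_cpow hx0]; push_cast; ring_nf
    have e2 : ((1:ℂ) - x) ^ ((k:ℂ) + 1 - 1) = (((1 - x) ^ k : ℝ) : ℂ) := by
      rw [add_sub_cancel_right, Complex.cpow_natCast]; push_cast; ring
    rw [e1, e2]; push_cast; ring
  have h2 : ((∏ j ∈ Finset.range (k + 1), ((s:ℂ) + j))) =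
      ((∏ j ∈ Finset.range (k + 1), (s + j) : ℝ) : ℂ) := by push_cast; ring
  rw [h1, h2] at h0
  have := h0.trans (by rw [← Complex.ofReal_natCast, ← Complex.ofReal_div])
  exact_mod_cast this

lemma gammaSeq_eq (a : ℝ) (ha : 0 ≤ a) (k : ℕ) :
    (k : ℝ) ^ (a + 1) * ∫ t in (0:ℝ)..1, (1 - t) ^ k * t ^ a = Real.GammaSeq (a + 1) k := by
  have h := beta_eval (a + 1) (by positivity) k
  rw [add_sub_cancel_right] at h
  rw [h, Real.GammaSeq, mul_div_assoc]

/-- Let `μ` be a probability measure on `[0,1]` with density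
`f` with respect to Lebesgue measure, and suppose
`|f (1 - x) - c x^β| ≤ C x^(β+δ)` for all `x ∈ (0,1]`, with `c, C, δ > 0` and
`β ≥ 0`.  Then the moments `m k = ∫_0^1 x^k f(x) dx` satisfy
`k^(1+β) m k → c Γ(β+1)` as `k → ∞`. -/
theorem stmt_6 (f : ℝ → ℝ) (c β δ C : ℝ)
    (hc : 0 < c) (hβ : 0 ≤ β) (hδ : 0 < δ) (hC : 0 < C)
    (hf_nonneg : ∀ x ∈ Set.Icc (0 : ℝ) 1, 0 ≤ f x)
    (hf_int : IntegrableOn f (Set.Icc (0 : ℝ) 1) volume)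
    (hf_prob : ∫ x in Set.Icc (0 : ℝ) 1, f x = 1)
    (hf_asymp : ∀ x ∈ Set.Ioc (0 : ℝ) 1, |f (1 - x) - c * x ^ β| ≤ C * x ^ (β + δ)) :
    Tendsto (fun k : ℕ => (k : ℝ) ^ (1 + β) * ∫ x in Set.Icc (0 : ℝ) 1, x ^ k * f x)
      atTop (𝓝 (c * Real.Gamma (β + 1))) := by
  have hcont : ∀ a : ℝ, 0 ≤ a → Continuous (fun t : ℝ => t ^ a) := fun a ha =>
    continuous_iff_continuousAt.2 fun x => Real.continuousAt_rpow_const x a (Or.inr ha)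
  set J : ℕ → ℝ := fun k => ∫ t in (0:ℝ)..1, (1 - t) ^ k * t ^ β with hJdef
  set J' : ℕ → ℝ := fun k => ∫ t in (0:ℝ)..1, (1 - t) ^ k * t ^ (β + δ) with hJ'def
  set I : ℕ → ℝ := fun k => ∫ t in (0:ℝ)..1, (1 - t) ^ k * f (1 - t) with hIdef
  -- integrability facts
  have hfr : IntervalIntegrable (fun t : ℝ => f (1 - t)) volume 0 1 := by
    have h1 : IntervalIntegrable f volume 0 1 :=
      (intervalIntegrable_iff_integrableOn_Ioc_of_le zero_le_one).2
        (hf_int.mono_set Set.Ioc_subset_Icc_self)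
    simpa using (h1.comp_sub_left 1).symm
  have hpow_int : ∀ (k : ℕ) (a : ℝ), 0 ≤ a →
      IntervalIntegrable (fun t : ℝ => (1 - t) ^ k * t ^ a) volume 0 1 := fun k a ha =>
    (((continuous_const.sub continuous_id).pow k).mul (hcont a ha)).intervalIntegrable 0 1
  have hfr' : IntegrableOn (fun t : ℝ => f (1 - t)) (Set.Ioc 0 1) volume :=
    (intervalIntegrable_iff_integrableOn_Ioc_of_le zero_le_one).1 hfr
  have hIm : ∀ k : ℕ, IntervalIntegrable (fun t : ℝ => (1 - t) ^ k * f (1 - t)) volume 0 1 := by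
    intro k
    rw [intervalIntegrable_iff_integrableOn_Ioc_of_le zero_le_one]
    refine Integrable.mono' hfr'.abs
      ((((continuous_const.sub continuous_id).pow k).aestronglyMeasurable).mul
        hfr'.aestronglyMeasurable) ?_
    refine (ae_restrict_iff' measurableSet_Ioc).2 (ae_of_all _ fun t ht => ?_)
    have h1 : (0:ℝ) ≤ 1 - t := by linarith [ht.2]
    rw [Real.norm_eq_abs, abs_mul]
    have : |(1 - t) ^ k| ≤ 1 := by
      rw [abs_pow]
      exact pow_le_one₀ (abs_nonneg _) (by rw [abs_of_nonneg h1]; linarith [ht.1])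
    calc |(1 - t) ^ k| * |f (1 - t)| ≤ 1 * |f (1 - t)| :=
          mul_le_mul_of_nonneg_right this (abs_nonneg _)
      _ = |f (1 - t)| := one_mul _
  -- the error bound
  have hEbound : ∀ k : ℕ, |I k - c * J k| ≤ C * J' k := by
    intro k
    have hsub : I k - c * J k = ∫ t in Set.Ioc (0:ℝ) 1,
        ((1 - t) ^ k * f (1 - t) - c * ((1 - t) ^ k * t ^ β)) := by
      rw [← intervalIntegral.integral_of_le zero_le_one,
        intervalIntegral.integral_sub (hIm k) ((hpow_int k β hβ).const_mul c),
        intervalIntegral.integral_const_mul]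
    have hJ'k : C * J' k = ∫ t in Set.Ioc (0:ℝ) 1, C * ((1 - t) ^ k * t ^ (β + δ)) := by
      rw [MeasureTheory.integral_const_mul, hJ'def]
      rw [← intervalIntegral.integral_of_le zero_le_one]
    rw [hsub, hJ'k, ← Real.norm_eq_abs]
    refine MeasureTheory.norm_integral_le_of_norm_le ?_ ?_
    · rw [← IntegrableOn, ← intervalIntegrable_iff_integrableOn_Ioc_of_le zero_le_one]
      exact ((hpow_int k (β + δ) (by positivity)).const_mul C)
    · refine (ae_restrict_iff' measurableSet_Ioc).2 (ae_of_all _ fun t ht => ?_)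
      have h1 : (0:ℝ) ≤ 1 - t := by linarith [ht.2]
      have key : (1 - t) ^ k * f (1 - t) - c * ((1 - t) ^ k * t ^ β)
          = (1 - t) ^ k * (f (1 - t) - c * t ^ β) := by ring
      rw [Real.norm_eq_abs, key, abs_mul, abs_of_nonneg (pow_nonneg h1 k)]
      calc (1 - t) ^ k * |f (1 - t) - c * t ^ β|
          ≤ (1 - t) ^ k * (C * t ^ (β + δ)) :=
            mul_le_mul_of_nonneg_left (hf_asymp t ht) (pow_nonneg h1 k)
        _ = C * ((1 - t) ^ k * t ^ (β + δ)) := by ring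
  -- limit of the error term
  have hb : Tendsto (fun k : ℕ => C * ((k:ℝ) ^ (-δ) * Real.GammaSeq (β + δ + 1) k))
      atTop (𝓝 0) := by
    have h1 : Tendsto (fun k : ℕ => ((k:ℝ)) ^ (-δ)) atTop (𝓝 0) :=
      (tendsto_rpow_neg_atTop hδ).comp tendsto_natCast_atTop_atTop
    have h2 := h1.mul (Real.GammaSeq_tendsto_Gamma (β + δ + 1))
    simpa using (h2.const_mul C)
  have herr : Tendsto (fun k : ℕ => (k:ℝ) ^ (1 + β) * (I k - c * J k)) atTop (𝓝 0) := by
    refine squeeze_zero_norm' ?_ hb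
    filter_upwards [eventually_ge_atTop 1] with k hk
    have hk0 : (0:ℝ) < (k:ℝ) := by exact_mod_cast Nat.lt_of_lt_of_le Nat.zero_lt_one hk
    have hkβ : (0:ℝ) ≤ (k:ℝ) ^ (1 + β) := Real.rpow_nonneg hk0.le _
    have hexp : (k:ℝ) ^ (1 + β) = (k:ℝ) ^ (-δ) * (k:ℝ) ^ (β + δ + 1) := by
      rw [← Real.rpow_add hk0]; congr 1; ring
    rw [Real.norm_eq_abs, abs_mul, abs_of_nonneg hkβ]
    calc (k:ℝ) ^ (1 + β) * |I k - c * J k|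
        ≤ (k:ℝ) ^ (1 + β) * (C * J' k) :=
          mul_le_mul_of_nonneg_left (hEbound k) hkβ
      _ = C * ((k:ℝ) ^ (-δ) * ((k:ℝ) ^ (β + δ + 1) * J' k)) := by rw [hexp]; ring
      _ = C * ((k:ℝ) ^ (-δ) * Real.GammaSeq (β + δ + 1) k) := by
          rw [gammaSeq_eq (β + δ) (by positivity) k]
  -- main limit
  have hmain : Tendsto
      (fun k : ℕ => c * Real.GammaSeq (β + 1) k + (k:ℝ) ^ (1 + β) * (I k - c * J k))
      atTop (𝓝 (c * Real.Gamma (β + 1))) := by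
    simpa using ((Real.GammaSeq_tendsto_Gamma (β + 1)).const_mul c).add herr
  refine hmain.congr fun k => ?_
  have hIcc : ∫ x in Set.Icc (0:ℝ) 1, x ^ k * f x = I k := by
    rw [MeasureTheory.integral_Icc_eq_integral_Ioc,
      ← intervalIntegral.integral_of_le zero_le_one]
    have h := intervalIntegral.integral_comp_sub_left (a := 0) (b := 1) (fun x => x ^ k * f x) 1
    norm_num at h
    exact h.symm
  rw [hIcc]
  have hG : c * Real.GammaSeq (β + 1) k = c * ((k:ℝ) ^ (1 + β) * J k) := by
    rw [← gammaSeq_eq β hβ k, add_comm 1 β]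
  rw [hG]; ring
end

section
/- For every L > 0, ∫_0^1 (1 − exp(−L u) − L u)/u² du + ∫_1^∞ (1 − exp(−L u))/u² du = L (1 − γ − log L), where γ is the Euler–Mascheroni constant (in particular both integrals converge). -/
/-!
Substituting `v = L u` turns the left-hand side into `L (∫₀^L f₀ + ∫_L^∞ f₁)` with
`f₀ v = (1 - e^{-v} - v) / v²` and `f₁ v = (1 - e^{-v}) / v²`. Both `f₀ v - log v e^{-v}`
and `f₁ v - log v e^{-v}` have elementary primitives,
`log v (e^{-v} - 1) - (1 - e^{-v} - v) / v` vanishing at `0⁺` and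
`log v e^{-v} - (1 - e^{-v}) / v` vanishing at `∞`, whose values at `L` add up to `1 - log L`.
What is left is `∫₀^∞ log v e^{-v} dv = Γ'(1) = -γ`.
-/

open MeasureTheory Set Filter Topology Real

lemma abs_exp_neg_sub_one_le {x : ℝ} (hx : 0 ≤ x) : |exp (-x) - 1| ≤ x := by
  have := exp_le_one_iff.2 (neg_nonpos.2 hx)
  rw [abs_le]
  constructor <;> linarith [one_sub_le_exp_neg x, exp_pos (-x)]

lemma abs_exp_neg_sub_one_add_le {x : ℝ} (hx : 0 ≤ x) : |exp (-x) - 1 + x| ≤ x ^ 2 := by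
  rcases le_total x 1 with h1 | h1
  · simpa using abs_exp_sub_one_sub_id_le (x := -x) (by rwa [abs_neg, abs_of_nonneg hx])
  · have := exp_le_one_iff.2 (neg_nonpos.2 hx)
    rw [abs_le]
    constructor <;> nlinarith [one_sub_le_exp_neg x, exp_pos (-x)]

lemma hasDerivAt_Gamma_one_eq_integral :
    HasDerivAt Gamma (∫ t in Ioi 0, log t * exp (-t)) 1 := by
  have h := Complex.hasDerivAt_GammaIntegral (s := 1) (by norm_num)
  simp only [sub_self, Complex.cpow_zero, one_mul] at h
  have hC : HasDerivAt Complex.Gamma (∫ t in Ioi 0, log t * exp (-t) : ℝ) 1 := by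
    simp only [← integral_complex_ofReal, Complex.ofReal_mul]
    refine h.congr_of_eventuallyEq ?_
    filter_upwards [(Complex.continuous_re.isOpen_preimage _ isOpen_Ioi).mem_nhds
      (by norm_num : (1 : ℂ) ∈ Complex.re ⁻¹' Ioi 0)] with s hs
    exact Complex.Gamma_eq_integral hs
  rw [← Complex.ofReal_one] at hC
  simpa [Complex.Gamma_ofReal] using hC.real_of_complex

lemma integral_log_mul_exp_neg : ∫ t in Ioi 0, log t * exp (-t) = -eulerMascheroniConstant :=
  hasDerivAt_Gamma_one_eq_integral.unique hasDerivAt_Gamma_one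

-- A function that is not integrable has Bochner integral `0`, and this one has integral `-γ`.
lemma integrableOn_log_mul_exp_neg : IntegrableOn (fun t => log t * exp (-t)) (Ioi 0) :=
  Integrable.of_integral_ne_zero <| by
    rw [integral_log_mul_exp_neg, neg_ne_zero]
    exact (one_half_pos.trans one_half_lt_eulerMascheroniConstant).ne'

lemma integrableOn_one_sub_exp_neg_sub_div_sq (c : ℝ) :
    IntegrableOn (fun v => (1 - exp (-v) - v) / v ^ 2) (Ioc 0 c) := by
  refine (integrableOn_const (C := (1 : ℝ)) (by simp)).mono' ?_ ?_
  · exact (ContinuousOn.div (by fun_prop) (by fun_prop) fun v hv => by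
      have := hv.1; positivity).aestronglyMeasurable measurableSet_Ioc
  · filter_upwards [ae_restrict_mem measurableSet_Ioc] with v hv
    rw [norm_div, norm_pow, Real.norm_eq_abs, Real.norm_eq_abs, abs_of_pos hv.1,
      div_le_one (pow_pos hv.1 2), show 1 - exp (-v) - v = -(exp (-v) - 1 + v) by ring, abs_neg]
    exact abs_exp_neg_sub_one_add_le hv.1.le

lemma integrableOn_one_sub_exp_neg_div_sq {c : ℝ} (hc : 0 < c) :
    IntegrableOn (fun v => (1 - exp (-v)) / v ^ 2) (Ioi c) := by
  refine (integrableOn_Ioi_rpow_of_lt (by norm_num : (-2 : ℝ) < -1) hc).mono' ?_ ?_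
  · exact (ContinuousOn.div (by fun_prop) (by fun_prop) fun v hv => by
      have := hc.trans hv; positivity).aestronglyMeasurable measurableSet_Ioi
  · filter_upwards [ae_restrict_mem measurableSet_Ioi] with v hv
    have hv : 0 < v := hc.trans hv
    rw [norm_div, norm_pow, Real.norm_eq_abs, Real.norm_eq_abs, abs_of_pos hv, abs_sub_comm,
      rpow_neg hv.le, rpow_two, div_eq_mul_inv]
    refine mul_le_of_le_one_left (by positivity) (abs_le.2 ⟨?_, ?_⟩) <;>
      linarith [exp_pos (-v), exp_le_one_iff.2 (neg_nonpos.2 hv.le)]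

lemma hasDerivAt_log_mul_exp_neg_sub_one_sub {v : ℝ} (hv : 0 < v) :
    HasDerivAt (fun v => log v * (exp (-v) - 1) - (1 - exp (-v) - v) / v)
      ((1 - exp (-v) - v) / v ^ 2 - log v * exp (-v)) v := by
  have hexp : HasDerivAt (fun v => exp (-v)) (-exp (-v)) v := by
    simpa using (hasDerivAt_neg v).exp
  refine (((hasDerivAt_log hv.ne').mul (hexp.sub_const 1)).sub
    (((hexp.const_sub 1).sub (hasDerivAt_id' v)).div (hasDerivAt_id' v) hv.ne')).congr_deriv ?_
  simp only [Pi.sub_apply]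
  field_simp
  ring

lemma hasDerivAt_log_mul_exp_neg_sub {v : ℝ} (hv : 0 < v) :
    HasDerivAt (fun v => log v * exp (-v) - (1 - exp (-v)) / v)
      ((1 - exp (-v)) / v ^ 2 - log v * exp (-v)) v := by
  have hexp : HasDerivAt (fun v => exp (-v)) (-exp (-v)) v := by
    simpa using (hasDerivAt_neg v).exp
  refine (((hasDerivAt_log hv.ne').mul hexp).sub
    ((hexp.const_sub 1).div (hasDerivAt_id' v) hv.ne')).congr_deriv ?_
  field_simp
  ring

lemma tendsto_log_mul_exp_neg_sub_one_sub_nhdsGT_zero :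
    Tendsto (fun v => log v * (exp (-v) - 1) - (1 - exp (-v) - v) / v) (𝓝[>] 0) (𝓝 0) := by
  have hmul_log : Tendsto (fun v => |v * log v| + v) (𝓝[>] 0) (𝓝 0) := by
    have : Tendsto (fun v => |v * log v| + v) (𝓝 0) (𝓝 0) :=
      (continuous_mul_log.abs.add continuous_id').tendsto' 0 0 (by simp)
    exact this.mono_left nhdsWithin_le_nhds
  refine squeeze_zero_norm' ?_ hmul_log
  filter_upwards [self_mem_nhdsWithin] with v (hv : 0 < v)
  have h₁ : |log v * (exp (-v) - 1)| ≤ |v * log v| := by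
    rw [abs_mul, abs_mul, mul_comm |v|]
    exact mul_le_mul_of_nonneg_left ((abs_exp_neg_sub_one_le hv.le).trans (le_abs_self v))
      (abs_nonneg _)
  have h₂ : |(1 - exp (-v) - v) / v| ≤ v := by
    rw [abs_div, abs_of_pos hv, div_le_iff₀ hv, ← sq,
      show 1 - exp (-v) - v = -(exp (-v) - 1 + v) by ring, abs_neg]
    exact abs_exp_neg_sub_one_add_le hv.le
  exact (abs_sub _ _).trans (add_le_add h₁ h₂)

lemma tendsto_log_mul_exp_neg_sub_atTop :
    Tendsto (fun v => log v * exp (-v) - (1 - exp (-v)) / v) atTop (𝓝 0) := by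
  have hexp : Tendsto (fun v => exp (-v)) atTop (𝓝 0) := tendsto_exp_neg_atTop_nhds_zero
  have hlog : Tendsto (fun v => log v * exp (-v)) atTop (𝓝 0) := by
    refine tendsto_of_tendsto_of_tendsto_of_le_of_le' tendsto_const_nhds
      (by simpa using tendsto_pow_mul_exp_neg_atTop_nhds_zero 1) ?_ ?_
    · filter_upwards [eventually_ge_atTop 1] with v hv
      exact mul_nonneg (log_nonneg hv) (exp_pos _).le
    · filter_upwards [eventually_gt_atTop 0] with v hv
      exact mul_le_mul_of_nonneg_right ((log_le_sub_one_of_pos hv).trans (by linarith))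
        (exp_pos _).le
  simpa using hlog.sub ((tendsto_const_nhds.sub hexp).div_atTop tendsto_id)

lemma integral_Ioc_one_sub_exp_neg_sub_div_sq {c : ℝ} (hc : 0 < c) :
    ∫ v in Ioc 0 c, (1 - exp (-v) - v) / v ^ 2
      = log c * (exp (-c) - 1) - (1 - exp (-c) - c) / c + ∫ v in Ioc 0 c, log v * exp (-v) := by
  have hlog : IntegrableOn (fun v => log v * exp (-v)) (Ioc 0 c) :=
    integrableOn_log_mul_exp_neg.mono_set Ioc_subset_Ioi_self
  have hftc := intervalIntegral.integral_eq_sub_of_hasDerivAt_of_tendsto hc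
    (fun v hv => hasDerivAt_log_mul_exp_neg_sub_one_sub hv.1)
    ((intervalIntegrable_iff_integrableOn_Ioc_of_le hc.le).2
      ((integrableOn_one_sub_exp_neg_sub_div_sq c).sub hlog))
    tendsto_log_mul_exp_neg_sub_one_sub_nhdsGT_zero
    ((hasDerivAt_log_mul_exp_neg_sub_one_sub hc).continuousAt.continuousWithinAt.tendsto)
  rw [intervalIntegral.integral_of_le hc.le,
    integral_sub (integrableOn_one_sub_exp_neg_sub_div_sq c) hlog] at hftc
  linarith

lemma integral_Ioi_one_sub_exp_neg_div_sq {c : ℝ} (hc : 0 < c) :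
    ∫ v in Ioi c, (1 - exp (-v)) / v ^ 2
      = (1 - exp (-c)) / c - log c * exp (-c) + ∫ v in Ioi c, log v * exp (-v) := by
  have hlog : IntegrableOn (fun v => log v * exp (-v)) (Ioi c) :=
    integrableOn_log_mul_exp_neg.mono_set (Ioi_subset_Ioi hc.le)
  have hftc := integral_Ioi_of_hasDerivAt_of_tendsto
    (hasDerivAt_log_mul_exp_neg_sub hc).continuousAt.continuousWithinAt
    (fun v hv => hasDerivAt_log_mul_exp_neg_sub (hc.trans hv))
    ((integrableOn_one_sub_exp_neg_div_sq hc).sub hlog) tendsto_log_mul_exp_neg_sub_atTop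
  rw [integral_sub (integrableOn_one_sub_exp_neg_div_sq hc) hlog] at hftc
  linarith

lemma integral_Ioc_add_integral_Ioi_one_sub_exp_neg {c : ℝ} (hc : 0 < c) :
    (∫ v in Ioc 0 c, (1 - exp (-v) - v) / v ^ 2) + ∫ v in Ioi c, (1 - exp (-v)) / v ^ 2
      = 1 - eulerMascheroniConstant - log c := by
  have hsplit : (∫ v in Ioc 0 c, log v * exp (-v)) + ∫ v in Ioi c, log v * exp (-v)
      = -eulerMascheroniConstant := by
    rw [← setIntegral_union (Ioc_disjoint_Ioi le_rfl) measurableSet_Ioi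
      (integrableOn_log_mul_exp_neg.mono_set Ioc_subset_Ioi_self)
      (integrableOn_log_mul_exp_neg.mono_set (Ioi_subset_Ioi hc.le)),
      Ioc_union_Ioi_eq_Ioi hc.le, integral_log_mul_exp_neg]
  have hboundary : log c * (exp (-c) - 1) - (1 - exp (-c) - c) / c
      + ((1 - exp (-c)) / c - log c * exp (-c)) = 1 - log c := by
    field_simp
    ring
  rw [integral_Ioc_one_sub_exp_neg_sub_div_sq hc, integral_Ioi_one_sub_exp_neg_div_sq hc]
  linarith

lemma one_sub_exp_neg_mul_sub_div_sq {L : ℝ} (hL : L ≠ 0) (u : ℝ) :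
    (1 - exp (-L * u) - L * u) / u ^ 2
      = L ^ 2 * ((1 - exp (-(L * u)) - L * u) / (L * u) ^ 2) := by
  rw [neg_mul, mul_div_assoc', mul_pow, mul_div_mul_left _ _ (pow_ne_zero 2 hL)]

lemma one_sub_exp_neg_mul_div_sq {L : ℝ} (hL : L ≠ 0) (u : ℝ) :
    (1 - exp (-L * u)) / u ^ 2 = L ^ 2 * ((1 - exp (-(L * u))) / (L * u) ^ 2) := by
  rw [neg_mul, mul_div_assoc', mul_pow, mul_div_mul_left _ _ (pow_ne_zero 2 hL)]

lemma integrableOn_Ioc_zero_one_comp_mul_left {g : ℝ → ℝ} {L : ℝ} (hL : 0 < L)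
    (hg : IntegrableOn g (Ioc 0 L)) : IntegrableOn (fun u => g (L * u)) (Ioc 0 1) := by
  have := ((intervalIntegrable_iff_integrableOn_Ioc_of_le hL.le).2 hg).comp_mul_left (c := L)
  rwa [zero_div, div_self hL.ne',
    intervalIntegrable_iff_integrableOn_Ioc_of_le zero_le_one] at this

lemma integral_Ioc_zero_one_comp_mul_left (g : ℝ → ℝ) {L : ℝ} (hL : 0 < L) :
    ∫ u in Ioc 0 1, g (L * u) = L⁻¹ * ∫ v in Ioc 0 L, g v := by
  rw [← intervalIntegral.integral_of_le zero_le_one,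
    intervalIntegral.integral_comp_mul_left _ hL.ne', mul_zero, mul_one,
    intervalIntegral.integral_of_le hL.le, smul_eq_mul]

/-- For every `L > 0`,
`∫_0^1 (1 - exp(-Lu) - Lu)/u² du + ∫_1^∞ (1 - exp(-Lu))/u² du
  = L (1 - γ - log L)`, where `γ` is the Euler–Mascheroni constant (and both
integrals converge). -/
theorem stmt_8 (L : ℝ) (hL : 0 < L) :
    IntegrableOn (fun u : ℝ => (1 - Real.exp (-L * u) - L * u) / u ^ 2)
        (Set.Ioc (0 : ℝ) 1) volume ∧
    IntegrableOn (fun u : ℝ => (1 - Real.exp (-L * u)) / u ^ 2)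
        (Set.Ioi (1 : ℝ)) volume ∧
    (∫ u in Set.Ioc (0 : ℝ) 1, (1 - Real.exp (-L * u) - L * u) / u ^ 2)
        + ∫ u in Set.Ioi (1 : ℝ), (1 - Real.exp (-L * u)) / u ^ 2
      = L * (1 - Real.eulerMascheroniConstant - Real.log L) := by
  simp only [one_sub_exp_neg_mul_sub_div_sq hL.ne', one_sub_exp_neg_mul_div_sq hL.ne']
  refine ⟨?_, ?_, ?_⟩
  · exact (integrableOn_Ioc_zero_one_comp_mul_left (g := fun v => (1 - exp (-v) - v) / v ^ 2) hL
      (integrableOn_one_sub_exp_neg_sub_div_sq L)).const_mul _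
  · have := (integrableOn_Ioi_comp_mul_left_iff (fun v => (1 - exp (-v)) / v ^ 2) 1 hL).2
      (by simpa using integrableOn_one_sub_exp_neg_div_sq hL)
    exact this.const_mul _
  · rw [integral_const_mul, integral_const_mul,
      integral_Ioc_zero_one_comp_mul_left (fun v => (1 - exp (-v) - v) / v ^ 2) hL,
      integral_comp_mul_left_Ioi (fun v => (1 - exp (-v)) / v ^ 2) 1 hL, mul_one, smul_eq_mul,
      ← integral_Ioc_add_integral_Ioi_one_sub_exp_neg hL]
    field_simp
end

section
/- Let α > 1 and L > 0, and let m : [1, ∞) → [0, 1] be a monotonically decreasing function with lim_{x→∞} x^α m(x) = L. Then lim_{n→∞} n^{−1/α} ∫_1^∞ [1 − (1 − m(x))^n] dx = L^{1/α} Γ((α − 1)/α), where Γ is the Gamma function. -/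
/-!
Substituting `x = n^(1/α) y` turns `n^(-1/α) ∫_1^∞ [1 - (1 - m x)^n] dx` into
`∫_{y > n^(-1/α)} [1 - (1 - m (n^(1/α) y))^n] dy`. Since `n m (n^(1/α) y) → L y^(-α)`, the integrand
tends to `1 - exp (-L y^(-α))`, and Bernoulli's inequality dominates it by
`min 1 ((L + 1) y^(-α))`, which is integrable as `α > 1`. Integrating the limit by parts against `y`
and substituting `y = 1/x` gives `L α ∫_0^∞ x^(α-2) exp (-L x^α) dx = L^(1/α) Γ((α-1)/α)`.
-/

open MeasureTheory Filter Set Real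
open scoped Topology

lemma abs_one_sub_exp_neg_le {t : ℝ} (ht : 0 ≤ t) : |1 - exp (-t)| ≤ min 1 t := by
  have h1 := one_sub_le_exp_neg t
  have h2 : exp (-t) ≤ 1 := exp_le_one_iff.2 (neg_nonpos.2 ht)
  rw [abs_of_nonneg (sub_nonneg.2 h2)]
  exact le_min (by linarith [exp_pos (-t)]) (by linarith)

lemma integrableOn_min_one_mul_rpow_neg {α C : ℝ} (hα : 1 < α) (hC : 0 ≤ C) :
    IntegrableOn (fun y : ℝ => min 1 (C * y ^ (-α))) (Ioi 0) := by
  have hmeas : AEStronglyMeasurable (fun y : ℝ => min 1 (C * y ^ (-α))) := by fun_prop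
  have hnorm : ∀ y : ℝ, 0 ≤ y → ‖min 1 (C * y ^ (-α))‖ = min 1 (C * y ^ (-α)) := fun y hy =>
    Real.norm_of_nonneg (le_min zero_le_one (mul_nonneg hC (rpow_nonneg hy _)))
  rw [← Ioc_union_Ioi_eq_Ioi zero_le_one]
  refine IntegrableOn.union ?_ ?_
  · refine (integrableOn_const (C := (1 : ℝ)) measure_Ioc_lt_top.ne).mono' hmeas.restrict
      ((ae_restrict_iff' measurableSet_Ioc).2 (.of_forall fun y hy => ?_))
    exact (hnorm y hy.1.le).trans_le (min_le_left _ _)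
  · refine ((integrableOn_Ioi_rpow_of_lt (neg_lt_neg hα) one_pos).const_mul C).mono'
      hmeas.restrict ((ae_restrict_iff' measurableSet_Ioi).2 (.of_forall fun y hy => ?_))
    exact (hnorm y (zero_le_one.trans hy.le)).trans_le (min_le_right _ _)

section Profile

variable {α L : ℝ}

lemma integrableOn_one_sub_exp_neg_mul_rpow_neg (hα : 1 < α) (hL : 0 ≤ L) :
    IntegrableOn (fun y : ℝ => 1 - exp (-L * y ^ (-α))) (Ioi 0) :=
  (integrableOn_min_one_mul_rpow_neg hα hL).mono' (by fun_prop) <|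
    (ae_restrict_iff' measurableSet_Ioi).2 <| .of_forall fun y hy => by
      rw [neg_mul, Real.norm_eq_abs]
      exact abs_one_sub_exp_neg_le (mul_nonneg hL (rpow_nonneg (le_of_lt hy) _))

lemma rpow_neg_one_smul_rpow_neg_mul_exp {x : ℝ} (hx : 0 < x) :
    (|(-1 : ℝ)| * x ^ ((-1 : ℝ) - 1)) • ((x ^ (-1 : ℝ)) ^ (-α) * exp (-L * (x ^ (-1 : ℝ)) ^ (-α)))
      = x ^ (α - 2) * exp (-L * x ^ α) := by
  have h1 : (x ^ (-1 : ℝ)) ^ (-α) = x ^ α := by rw [← rpow_mul hx.le]; simp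
  have h2 : x ^ ((-1 : ℝ) - 1) * x ^ α = x ^ (α - 2) := by rw [← rpow_add hx]; ring_nf
  rw [h1, smul_eq_mul, abs_neg, abs_one, one_mul, ← mul_assoc, h2]

lemma integrableOn_rpow_neg_mul_exp_neg_mul_rpow_neg (hα : 1 < α) (hL : 0 < L) :
    IntegrableOn (fun y : ℝ => y ^ (-α) * exp (-L * y ^ (-α))) (Ioi 0) :=
  (integrableOn_Ioi_comp_rpow_iff _ (by norm_num : (-1 : ℝ) ≠ 0)).1 <|
    (integrableOn_rpow_mul_exp_neg_mul_rpow (by linarith) (by linarith) hL).congr_fun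
      (fun _ hx => (rpow_neg_one_smul_rpow_neg_mul_exp hx).symm) measurableSet_Ioi

lemma integral_rpow_neg_mul_exp_neg_mul_rpow_neg (hα : 1 < α) (hL : 0 < L) :
    ∫ y in Ioi 0, y ^ (-α) * exp (-L * y ^ (-α))
      = L ^ (-(α - 1) / α) * (1 / α) * Gamma ((α - 1) / α) := by
  rw [← integral_comp_rpow_Ioi _ (by norm_num : (-1 : ℝ) ≠ 0),
    setIntegral_congr_fun measurableSet_Ioi fun _ hx => rpow_neg_one_smul_rpow_neg_mul_exp hx,
    integral_rpow_mul_exp_neg_mul_rpow (by linarith) (by linarith) hL,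
    show α - 2 + 1 = α - 1 by ring]

lemma hasDerivAt_mul_one_sub_exp_neg_mul_rpow_neg {y : ℝ} (hy : 0 < y) :
    HasDerivAt (fun y : ℝ => y * (1 - exp (-L * y ^ (-α))))
      ((1 - exp (-L * y ^ (-α))) - L * α * (y ^ (-α) * exp (-L * y ^ (-α)))) y := by
  have hexp := ((hasDerivAt_rpow_const (p := -α) (Or.inl hy.ne')).const_mul (-L)).exp
  refine ((hasDerivAt_id' y).mul (hexp.const_sub 1)).congr_deriv ?_
  rw [rpow_sub_one hy.ne']
  field_simp
  ring

lemma continuousWithinAt_mul_one_sub_exp_neg_mul_rpow_neg (hL : 0 ≤ L) :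
    ContinuousWithinAt (fun y : ℝ => y * (1 - exp (-L * y ^ (-α)))) (Ici 0) 0 := by
  rw [ContinuousWithinAt, zero_mul]
  refine squeeze_zero_norm' ?_ (tendsto_norm_zero.mono_left nhdsWithin_le_nhds)
  filter_upwards [self_mem_nhdsWithin] with y (hy : 0 ≤ y)
  rw [norm_mul, neg_mul, Real.norm_eq_abs (1 - _)]
  exact mul_le_of_le_one_right (norm_nonneg y)
    ((abs_one_sub_exp_neg_le (by positivity)).trans (min_le_left _ _))

lemma tendsto_mul_one_sub_exp_neg_mul_rpow_neg_atTop (hα : 1 < α) (hL : 0 ≤ L) :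
    Tendsto (fun y : ℝ => y * (1 - exp (-L * y ^ (-α)))) atTop (𝓝 0) := by
  have h := (tendsto_rpow_neg_atTop (sub_pos.2 hα)).const_mul L
  rw [mul_zero] at h
  refine squeeze_zero_norm' ?_ h
  filter_upwards [eventually_gt_atTop 0] with y hy
  rw [norm_mul, neg_mul, Real.norm_eq_abs (1 - _), Real.norm_of_nonneg hy.le]
  calc y * |1 - exp (-(L * y ^ (-α)))| ≤ y * (L * y ^ (-α)) := by
        gcongr
        exact (abs_one_sub_exp_neg_le (by positivity)).trans (min_le_right _ _)
    _ = L * y ^ (-(α - 1)) := by rw [show -(α - 1) = 1 + -α by ring, rpow_add hy, rpow_one]; ring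

theorem integral_one_sub_exp_neg_mul_rpow_neg (hα : 1 < α) (hL : 0 < L) :
    ∫ y in Ioi 0, (1 - exp (-L * y ^ (-α))) = L ^ (1 / α) * Gamma ((α - 1) / α) := by
  have hg := integrableOn_one_sub_exp_neg_mul_rpow_neg hα hL.le
  have hk := (integrableOn_rpow_neg_mul_exp_neg_mul_rpow_neg hα hL).const_mul (L * α)
  have h := integral_Ioi_of_hasDerivAt_of_tendsto
    (continuousWithinAt_mul_one_sub_exp_neg_mul_rpow_neg hL.le)
    (fun _ hy => hasDerivAt_mul_one_sub_exp_neg_mul_rpow_neg hy) (hg.sub hk)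
    (tendsto_mul_one_sub_exp_neg_mul_rpow_neg_atTop hα hL.le)
  rw [integral_sub hg hk, integral_const_mul, integral_rpow_neg_mul_exp_neg_mul_rpow_neg hα hL,
    zero_mul, sub_zero, sub_eq_zero] at h
  have hα0 : α ≠ 0 := by positivity
  rw [h, show 1 / α = -(α - 1) / α + 1 by field_simp; ring, rpow_add_one hL.ne']
  field_simp
  ring

end Profile

lemma abs_one_sub_one_sub_pow_le {a : ℝ} (h0 : 0 ≤ a) (h1 : a ≤ 1) (n : ℕ) :
    |1 - (1 - a) ^ n| ≤ min 1 (n * a) := by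
  have hpow0 : 0 ≤ (1 - a) ^ n := pow_nonneg (sub_nonneg.2 h1) n
  have hpow1 : (1 - a) ^ n ≤ 1 := pow_le_one₀ (sub_nonneg.2 h1) (by linarith)
  have hbern : 1 + n * (-a) ≤ (1 + -a) ^ n := one_add_mul_le_pow (by linarith) n
  rw [← sub_eq_add_neg, mul_neg, ← sub_eq_add_neg] at hbern
  rw [abs_of_nonneg (sub_nonneg.2 hpow1)]
  exact le_min (by linarith) (by linarith)

lemma integral_Ioi_one_eq_mul_integral_indicator (h : ℝ → ℝ) {c : ℝ} (hc : 0 < c) :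
    ∫ x in Ioi 1, h x = c * ∫ y in Ioi 0, (Ioi c⁻¹).indicator (fun y => h (c * y)) y := by
  rw [setIntegral_indicator measurableSet_Ioi, Ioi_inter_Ioi, max_eq_right (inv_pos.2 hc).le,
    integral_comp_mul_left_Ioi h _ hc, mul_inv_cancel₀ hc.ne', smul_eq_mul,
    mul_inv_cancel_left₀ hc.ne']

section Tail

variable {m : ℝ → ℝ} {α L : ℝ}

lemma eventually_le_mul_rpow_neg (hm : Tendsto (fun x => x ^ α * m x) atTop (𝓝 L)) {C : ℝ}
    (hC : L < C) : ∀ᶠ x in atTop, m x ≤ C * x ^ (-α) := by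
  filter_upwards [hm.eventually (eventually_le_nhds hC), eventually_gt_atTop 0] with x hx hx0
  rwa [rpow_neg hx0.le, ← div_eq_mul_inv, le_div_iff₀ (rpow_pos_of_pos hx0 α), mul_comm]

lemma tendsto_natCast_mul_comp_rpow_mul (hα : 0 < α)
    (hm : Tendsto (fun x => x ^ α * m x) atTop (𝓝 L)) {y : ℝ} (hy : 0 < y) :
    Tendsto (fun n : ℕ => (n : ℝ) * m ((n : ℝ) ^ (1 / α) * y)) atTop (𝓝 (L * y ^ (-α))) := by
  have hc : Tendsto (fun n : ℕ => (n : ℝ) ^ (1 / α) * y) atTop atTop :=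
    ((tendsto_rpow_atTop (by positivity)).comp tendsto_natCast_atTop_atTop).atTop_mul_const hy
  refine ((hm.comp hc).mul_const (y ^ (-α))).congr fun n => ?_
  have hyα : y ^ α ≠ 0 := (rpow_pos_of_pos hy α).ne'
  simp only [Function.comp_apply]
  rw [mul_rpow (by positivity) hy.le, ← rpow_mul (Nat.cast_nonneg n), one_div_mul_cancel hα.ne',
    rpow_one, rpow_neg hy.le]
  field_simp

lemma norm_indicator_one_sub_one_sub_pow_le {C X c y : ℝ} {n : ℕ} (hα : 0 ≤ α) (hC : 1 ≤ C)
    (hm_range : ∀ x, 1 ≤ x → m x ∈ Icc (0 : ℝ) 1) (hmC : ∀ x, X ≤ x → m x ≤ C * x ^ (-α))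
    (hc : 0 < c) (hcn : c ^ α = n) (hXc : X ≤ c) (hy : 0 < y) :
    ‖(Ioi c⁻¹).indicator (fun y => 1 - (1 - m (c * y)) ^ n) y‖ ≤ min 1 (C * y ^ (-α)) := by
  by_cases hyc : y ∈ Ioi c⁻¹
  swap
  · rw [indicator_of_notMem hyc, norm_zero]
    exact le_min zero_le_one (by positivity)
  have hcy : 1 ≤ c * y := by
    have := mul_lt_mul_of_pos_left (mem_Ioi.1 hyc) hc
    rw [mul_inv_cancel₀ hc.ne'] at this
    exact this.le
  rw [indicator_of_mem hyc, Real.norm_eq_abs]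
  have hbound := abs_one_sub_one_sub_pow_le (hm_range _ hcy).1 (hm_range _ hcy).2 n
  rcases le_or_gt y 1 with hy1 | hy1
  · have h1 : 1 ≤ C * y ^ (-α) := one_le_mul_of_one_le_of_one_le hC
      (one_le_rpow_of_pos_of_le_one_of_nonpos hy hy1 (by linarith))
    rw [min_eq_left h1]
    exact hbound.trans (min_le_left _ _)
  · have hn : (n : ℝ) ≠ 0 := hcn ▸ (rpow_pos_of_pos hc α).ne'
    refine hbound.trans (min_le_min_left _ ?_)
    calc n * m (c * y) ≤ n * (C * (c * y) ^ (-α)) := by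
          gcongr
          exact hmC _ (hXc.trans (le_mul_of_one_le_right hc.le hy1.le))
      _ = C * y ^ (-α) := by
          rw [mul_rpow hc.le hy.le, rpow_neg hc.le, hcn]
          field_simp

theorem tendsto_integral_indicator_one_sub_one_sub_pow (hα : 1 < α) (hL : 0 < L)
    (hm_meas : Measurable m) (hm_range : ∀ x, 1 ≤ x → m x ∈ Icc (0 : ℝ) 1)
    (hm_lim : Tendsto (fun x => x ^ α * m x) atTop (𝓝 L)) :
    Tendsto (fun n : ℕ => ∫ y in Ioi 0,
        (Ioi ((n : ℝ) ^ (1 / α))⁻¹).indicator (fun y => 1 - (1 - m ((n : ℝ) ^ (1 / α) * y)) ^ n) y)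
      atTop (𝓝 (∫ y in Ioi 0, (1 - exp (-L * y ^ (-α))))) := by
  have hα0 : 0 < α := by linarith
  have hc : Tendsto (fun n : ℕ => (n : ℝ) ^ (1 / α)) atTop atTop :=
    (tendsto_rpow_atTop (by positivity)).comp tendsto_natCast_atTop_atTop
  obtain ⟨X, hX⟩ := eventually_atTop.1 (eventually_le_mul_rpow_neg hm_lim (lt_add_one L))
  refine tendsto_integral_filter_of_dominated_convergence (fun y => min 1 ((L + 1) * y ^ (-α)))
    (.of_forall fun n => ?_) ?_ (integrableOn_min_one_mul_rpow_neg hα (by linarith)) ?_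
  · exact ((measurable_const.sub ((measurable_const.sub (hm_meas.comp
      (measurable_const_mul _))).pow_const n)).indicator measurableSet_Ioi).aestronglyMeasurable
  · filter_upwards [hc.eventually_ge_atTop X, eventually_gt_atTop 0] with n hXc hn
    refine (ae_restrict_iff' measurableSet_Ioi).2 (.of_forall fun y hy => ?_)
    refine norm_indicator_one_sub_one_sub_pow_le hα0.le (by linarith) hm_range hX
      (by positivity) ?_ hXc hy
    rw [one_div, rpow_inv_rpow (Nat.cast_nonneg n) hα0.ne']
  · refine (ae_restrict_iff' measurableSet_Ioi).2 (.of_forall fun y hy => ?_)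
    have hpow := (Real.tendsto_one_add_pow_exp_of_tendsto
      ((tendsto_natCast_mul_comp_rpow_mul hα0 hm_lim hy).neg.congr fun n =>
        (mul_neg _ _).symm)).const_sub 1
    simp only [← sub_eq_add_neg, ← neg_mul] at hpow
    refine hpow.congr' ?_
    filter_upwards [hc.eventually_gt_atTop y⁻¹] with n hn
    rw [indicator_of_mem (mem_Ioi.2 (inv_lt_of_inv_lt₀ hy hn))]

theorem tendsto_rpow_neg_mul_integral_one_sub_one_sub_pow (hα : 1 < α) (hL : 0 < L)
    (hm_meas : Measurable m) (hm_range : ∀ x, 1 ≤ x → m x ∈ Icc (0 : ℝ) 1)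
    (hm_lim : Tendsto (fun x => x ^ α * m x) atTop (𝓝 L)) :
    Tendsto (fun n : ℕ => (n : ℝ) ^ (-(1 / α)) * ∫ x in Ioi 1, (1 - (1 - m x) ^ n))
      atTop (𝓝 (L ^ (1 / α) * Gamma ((α - 1) / α))) := by
  rw [← integral_one_sub_exp_neg_mul_rpow_neg hα hL]
  refine (tendsto_integral_indicator_one_sub_one_sub_pow hα hL hm_meas hm_range hm_lim).congr' ?_
  filter_upwards [eventually_gt_atTop 0] with n hn
  have hc : 0 < (n : ℝ) ^ (1 / α) := by positivity
  rw [integral_Ioi_one_eq_mul_integral_indicator (fun x => 1 - (1 - m x) ^ n) hc,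
    rpow_neg (Nat.cast_nonneg n), inv_mul_cancel_left₀ hc.ne']

end Tail

/-- Let `α > 1`, `L > 0`, and let `m : [1,∞) → [0,1]` be
monotonically decreasing with `x^α m(x) → L` as `x → ∞`.  Then
`n^(-1/α) ∫_1^∞ [1 - (1 - m x)^n] dx → L^(1/α) Γ((α-1)/α)` as `n → ∞`. -/
theorem stmt_9 (α L : ℝ) (hα : 1 < α) (hL : 0 < L) (m : ℝ → ℝ)
    (hm_range : ∀ x, 1 ≤ x → m x ∈ Set.Icc (0 : ℝ) 1)
    (hm_anti : AntitoneOn m (Set.Ici (1 : ℝ)))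
    (hm_lim : Tendsto (fun x : ℝ => x ^ α * m x) atTop (𝓝 L)) :
    Tendsto (fun n : ℕ =>
        (n : ℝ) ^ (-(1 / α)) * ∫ x in Set.Ioi (1 : ℝ), (1 - (1 - m x) ^ n))
      atTop (𝓝 (L ^ (1 / α) * Real.Gamma ((α - 1) / α))) := by
  set m' : ℝ → ℝ := fun x => m (max x 1)
  have hm' : ∀ x, 1 ≤ x → m' x = m x := fun x hx => congrArg m (max_eq_left hx)
  have hm'_anti : Antitone m' := fun x y hxy =>
    hm_anti (le_max_right x 1) (le_max_right y 1) (max_le_max_right 1 hxy)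
  have key := tendsto_rpow_neg_mul_integral_one_sub_one_sub_pow hα hL hm'_anti.measurable
    (fun x hx => hm' x hx ▸ hm_range x hx)
    (hm_lim.congr' (eventually_ge_atTop 1 |>.mono fun x hx => by simp only [hm' x hx]))
  refine key.congr fun n => ?_
  rw [setIntegral_congr_fun measurableSet_Ioi fun x hx => by rw [hm' x (le_of_lt hx)]]
end

section
/- Let μ be a probability measure on [0, 1] with continuous density f with respect to Lebesgue measure, and suppose lim_{x→1⁻} f(x)/(1−x)^β = c for some constants β > 0 and c > 0. Then, with ζ_μ(k) = ∑_{j=1}^∞ m_j^k the moment zeta function of μ, lim_{n→∞} n^{−1/(1+β)} ∑_{k=1}^n (−1)^k C(n,k) ζ_μ(k) = −(c Γ(β + 1))^{1/(β+1)} Γ(β/(β + 1)). -/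
/-!
Write `a = c Γ(β+1)` and `p = β + 1`. Substituting `x = 1 - u/j` in the moment integral and using
dominated convergence gives the Abelian asymptotics `j^p m_j → a`. By the binomial theorem the
alternating sum equals `-∑_j (1 - (1 - m_j)^n)`, and the scaling `j ≈ y n^{1/p}` turns
`n^{-1/p} ∑_j (1 - (1 - m_j)^n)` into the integral over `y > 0` of a step function which tends to
`1 - exp (-a y^{-p})` and, since `m_j ≤ C j^{-p}`, is dominated by `min 1 (C y^{-p})`. By the
layer-cake formula the limit integral equals `a^{1/p} Γ(1 - 1/p)`.
-/

open MeasureTheory Filter Finset Real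
open scoped Topology

theorem sum_Icc_neg_one_pow_mul_choose_mul_pow {R : Type*} [CommRing R] (x : R) (n : ℕ) :
    ∑ k ∈ Icc 1 n, (-1 : R) ^ k * n.choose k * x ^ k = (1 - x) ^ n - 1 := by
  rw [sub_eq_neg_add 1 x, add_pow, sum_range_succ', ← Ico_add_one_right_eq_Icc,
    sum_Ico_eq_sum_range]
  simp only [one_pow, mul_one, pow_zero, Nat.choose_zero_right, Nat.cast_one,
    add_sub_cancel_right, add_tsub_cancel_right]
  refine sum_congr rfl fun k _ ↦ ?_
  rw [add_comm 1 k, neg_pow]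
  ring

theorem sum_Icc_neg_one_pow_mul_choose_mul_tsum_pow {x : ℕ → ℝ}
    (hx : ∀ k, 1 ≤ k → Summable fun j ↦ x j ^ k) (n : ℕ) :
    ∑ k ∈ Icc 1 n, (-1 : ℝ) ^ k * n.choose k * ∑' j, x j ^ k =
      -∑' j, (1 - (1 - x j) ^ n) := by
  have hsum : ∀ k ∈ Icc 1 n, Summable fun j ↦ (-1 : ℝ) ^ k * n.choose k * x j ^ k :=
    fun k hk ↦ (hx k (mem_Icc.mp hk).1).mul_left _
  simp_rw [← tsum_mul_left, ← Summable.tsum_finsetSum hsum,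
    sum_Icc_neg_one_pow_mul_choose_mul_pow, ← tsum_neg, neg_sub]

section StepFunction

variable {E : Type*} [NormedAddCommGroup E] [NormedSpace ℝ E] [CompleteSpace E]

theorem integral_Ioi_natCeil {g : ℕ → E} (hg : IntegrableOn (fun y : ℝ ↦ g ⌈y⌉₊) (Set.Ioi 0)) :
    ∫ y in Set.Ioi (0 : ℝ), g ⌈y⌉₊ = ∑' j : ℕ, g (j + 1) := by
  have hcover : Set.Ioi (0 : ℝ) = ⋃ j : ℕ, Set.Ioc (j : ℝ) (j + 1) := by
    ext y
    simp only [Set.mem_Ioi, Set.mem_iUnion, Set.mem_Ioc]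
    refine ⟨fun hy ↦ ⟨⌈y⌉₊ - 1, ?_, ?_⟩, fun ⟨j, hj, _⟩ ↦ (Nat.cast_nonneg j).trans_lt hj⟩
    · have := Nat.ceil_lt_add_one hy.le
      rw [Nat.cast_sub (Nat.one_le_ceil_iff.mpr hy)]; push_cast; linarith
    · have := Nat.le_ceil y
      rw [Nat.cast_sub (Nat.one_le_ceil_iff.mpr hy)]; push_cast; linarith
  have hdisj : Pairwise (Function.onFun Disjoint fun j : ℕ ↦ Set.Ioc (j : ℝ) (j + 1)) :=
    fun i j hij ↦ by
      simpa using Set.pairwise_disjoint_Ioc_intCast ℝ (Nat.cast_injective.ne hij : (i : ℤ) ≠ j)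
  have hpiece : ∀ j : ℕ, ∫ y in Set.Ioc (j : ℝ) (j + 1), g ⌈y⌉₊ = g (j + 1) := fun j ↦ by
    have hceil : ∀ y ∈ Set.Ioc (j : ℝ) (j + 1), ⌈y⌉₊ = j + 1 := fun y hy ↦
      (Nat.ceil_eq_iff (Nat.succ_ne_zero j)).mpr (by push_cast; exact ⟨by simpa using hy.1, hy.2⟩)
    rw [setIntegral_congr_fun measurableSet_Ioc fun y hy ↦ congrArg g (hceil y hy)]
    simp
  rw [hcover, integral_iUnion (fun _ ↦ measurableSet_Ioc) hdisj (hcover ▸ hg)]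
  exact tsum_congr hpiece

theorem integral_Ioi_natCeil_mul {g : ℕ → E} {s : ℝ} (hs : 0 < s)
    (hg : IntegrableOn (fun y ↦ g ⌈y * s⌉₊) (Set.Ioi 0)) :
    ∫ y in Set.Ioi 0, g ⌈y * s⌉₊ = s⁻¹ • ∑' j : ℕ, g (j + 1) := by
  rw [integral_comp_mul_right_Ioi (fun y ↦ g ⌈y⌉₊) 0 hs, zero_mul, integral_Ioi_natCeil]
  simpa using (integrableOn_Ioi_comp_mul_right_iff (fun y ↦ g ⌈y⌉₊) 0 hs).mp hg

end StepFunction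

theorem volume_Ioi_setOf_lt_mul_rpow_neg {a p t : ℝ} (ha : 0 < a) (hp : 0 < p) (ht : 0 < t) :
    volume.restrict (Set.Ioi 0) {y | t < a * y ^ (-p)} = ENNReal.ofReal ((a / t) ^ (1 / p)) := by
  have hset : {y | t < a * y ^ (-p)} ∩ Set.Ioi 0 = Set.Ioo 0 ((a / t) ^ (1 / p)) := by
    ext y
    simp only [Set.mem_inter_iff, Set.mem_ofPred_eq, Set.mem_Ioi, Set.mem_Ioo,
      and_comm (b := 0 < y)]
    refine and_congr_right fun hy ↦ ?_
    rw [rpow_neg hy.le, ← div_eq_mul_inv, lt_div_iff₀ (rpow_pos_of_pos hy p), ← lt_div_iff₀' ht,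
      ← rpow_lt_rpow_iff (by positivity) (by positivity) (one_div_pos.mpr hp), ← rpow_mul hy.le,
      mul_one_div_cancel hp.ne', rpow_one]
  rw [Measure.restrict_apply' measurableSet_Ioi, hset, volume_Ioo, sub_zero]

theorem integral_Ioi_one_sub_exp_neg_mul_rpow_neg {a p : ℝ} (ha : 0 < a) (hp : 1 < p) :
    ∫ y in Set.Ioi 0, (1 - exp (-(a * y ^ (-p)))) = a ^ (1 / p) * Gamma (1 - 1 / p) := by
  have hp0 : 0 < p := by linarith
  have hs : 0 < 1 - 1 / p := by rw [sub_pos, div_lt_one hp0]; exact hp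
  have hg_nn : 0 ≤ᵐ[volume.restrict (Set.Ioi 0)] fun y : ℝ ↦ a * y ^ (-p) :=
    (ae_restrict_iff' measurableSet_Ioi).mpr <| .of_forall fun y hy ↦ by
      have := rpow_pos_of_pos (Set.mem_Ioi.mp hy) (-p); positivity
  have hexp : ∀ x, ∫ t in 0..x, exp (-t) = 1 - exp (-x) := fun x ↦ by
    simp [intervalIntegral.integral_comp_neg (fun t ↦ exp t)]
  have hlayer := lintegral_comp_eq_lintegral_meas_lt_mul _ hg_nn (by fun_prop)
    (g := fun t ↦ exp (-t)) (fun t _ ↦ (by fun_prop : Continuous _).intervalIntegrable 0 t)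
    (.of_forall fun t ↦ (exp_pos (-t)).le)
  simp only [hexp] at hlayer
  have hGamma :
      ∫ t in Set.Ioi 0, (a / t) ^ (1 / p) * exp (-t) = a ^ (1 / p) * Gamma (1 - 1 / p) := by
    rw [Gamma_eq_integral hs, ← integral_const_mul]
    refine setIntegral_congr_fun measurableSet_Ioi fun t (ht : 0 < t) ↦ ?_
    rw [div_rpow ha.le ht.le, sub_sub_cancel_left, rpow_neg ht.le]
    ring
  rw [← hGamma, integral_eq_lintegral_of_nonneg_ae, hlayer, integral_eq_lintegral_of_nonneg_ae]
  · congr 1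
    refine setLIntegral_congr_fun measurableSet_Ioi fun t (ht : 0 < t) ↦ ?_
    rw [volume_Ioi_setOf_lt_mul_rpow_neg ha hp0 ht, ENNReal.ofReal_mul (by positivity)]
  · exact (ae_restrict_iff' measurableSet_Ioi).mpr <| .of_forall fun t (ht : 0 < t) ↦ by positivity
  · exact (by fun_prop : Measurable fun t : ℝ ↦ (a / t) ^ (1 / p) * exp (-t)).aestronglyMeasurable
  · filter_upwards [hg_nn] with y hy
    simpa using hy
  · exact (by fun_prop : Measurable fun y : ℝ ↦ 1 - exp (-(a * y ^ (-p)))).aestronglyMeasurable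

theorem integrableOn_Ioi_min_one_mul_rpow_neg {C p : ℝ} (hC : 0 ≤ C) (hp : 1 < p) :
    IntegrableOn (fun y ↦ min 1 (C * y ^ (-p))) (Set.Ioi 0) := by
  have hmeas : AEStronglyMeasurable (fun y : ℝ ↦ min 1 (C * y ^ (-p))) volume :=
    (by fun_prop : Measurable fun y : ℝ ↦ min 1 (C * y ^ (-p))).aestronglyMeasurable
  have hnn : ∀ y ∈ Set.Ioi (0 : ℝ), ‖min 1 (C * y ^ (-p))‖ = min 1 (C * y ^ (-p)) :=
    fun y (hy : 0 < y) ↦ Real.norm_of_nonneg (by positivity)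
  rw [← Set.Ioc_union_Ioi_eq_Ioi zero_le_one]
  refine .union (.mono' (g := fun _ ↦ 1) (integrableOn_const (by simp)) hmeas.restrict ?_)
    (.mono' (((integrableOn_Ioi_rpow_iff (s := -p) zero_lt_one).mpr (by linarith)).const_mul C)
      hmeas.restrict ?_)
  · exact (ae_restrict_iff' measurableSet_Ioc).mpr <| .of_forall fun y hy ↦
      (hnn y hy.1).trans_le (min_le_left _ _)
  · exact (ae_restrict_iff' measurableSet_Ioi).mpr <| .of_forall fun y (hy : 1 < y) ↦
      (hnn y (zero_lt_one.trans hy)).trans_le (min_le_right _ _)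

theorem tendsto_mul_natCast_rpow_atTop {p y : ℝ} (hp : 0 < p) (hy : 0 < y) :
    Tendsto (fun n : ℕ ↦ y * (n : ℝ) ^ (1 / p)) atTop atTop :=
  ((tendsto_rpow_atTop (one_div_pos.mpr hp)).comp tendsto_natCast_atTop_atTop).const_mul_atTop hy

theorem tendsto_natCeil_mul_rpow_div {p y : ℝ} (hp : 0 < p) (hy : 0 < y) :
    Tendsto (fun n : ℕ ↦ (⌈y * (n : ℝ) ^ (1 / p)⌉₊ : ℝ) / (n : ℝ) ^ (1 / p)) atTop (𝓝 y) := by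
  have hs := tendsto_mul_natCast_rpow_atTop hp hy
  have := (tendsto_nat_ceil_div_atTop.comp hs).mul_const y
  rw [one_mul] at this
  refine this.congr' ((hs.eventually_gt_atTop 0).mono fun n hn ↦ ?_)
  have : (n : ℝ) ^ (1 / p) ≠ 0 := right_ne_zero_of_mul hn.ne'
  simp only [Function.comp_apply]
  field_simp

section Sequence

variable {m : ℕ → ℝ} {a p : ℝ}

theorem exists_le_mul_rpow_neg_of_tendsto
    (h : Tendsto (fun j : ℕ ↦ (j : ℝ) ^ p * m j) atTop (𝓝 a)) :
    ∃ C, 0 ≤ C ∧ ∀ k : ℕ, 1 ≤ k → m k ≤ C * (k : ℝ) ^ (-p) := by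
  obtain ⟨C, hC⟩ := h.bddAbove_range
  refine ⟨max C 0, le_max_right _ _, fun k hk ↦ ?_⟩
  have hk0 : (0 : ℝ) < k := by exact_mod_cast hk
  rw [rpow_neg hk0.le, ← div_eq_mul_inv, le_div_iff₀' (rpow_pos_of_pos hk0 p)]
  exact (hC ⟨k, rfl⟩).trans (le_max_left _ _)

theorem summable_pow_succ_of_tendsto (hm0 : ∀ j, 0 ≤ m j) (hm1 : ∀ j, m j ≤ 1) (hp : 1 < p)
    (h : Tendsto (fun j : ℕ ↦ (j : ℝ) ^ p * m j) atTop (𝓝 a)) {k : ℕ} (hk : 1 ≤ k) :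
    Summable fun j : ℕ ↦ m (j + 1) ^ k := by
  obtain ⟨C, -, hC⟩ := exists_le_mul_rpow_neg_of_tendsto h
  have hsum : Summable fun j : ℕ ↦ C * ((j + 1 : ℕ) : ℝ) ^ (-p) :=
    ((summable_nat_add_iff 1).mpr (summable_nat_rpow.mpr (by linarith))).mul_left C
  refine hsum.of_nonneg_of_le (fun j ↦ pow_nonneg (hm0 _) k) fun j ↦ ?_
  exact (pow_le_of_le_one (hm0 _) (hm1 _) (by omega)).trans (hC (j + 1) (by omega))

theorem norm_one_sub_one_sub_pow_natCeil_le {C : ℝ} (hm0 : ∀ j, 0 ≤ m j) (hm1 : ∀ j, m j ≤ 1)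
    (hC0 : 0 ≤ C) (hC : ∀ k : ℕ, 1 ≤ k → m k ≤ C * (k : ℝ) ^ (-p)) (hp : 0 < p) {n : ℕ} (hn : 1 ≤ n)
    {y : ℝ} (hy : 0 < y) :
    ‖1 - (1 - m ⌈y * (n : ℝ) ^ (1 / p)⌉₊) ^ n‖ ≤ min 1 (C * y ^ (-p)) := by
  set s := (n : ℝ) ^ (1 / p)
  set k := ⌈y * s⌉₊
  have hn0 : (0 : ℝ) < n := by exact_mod_cast hn
  have hys : 0 < y * s := mul_pos hy (rpow_pos_of_pos hn0 _)
  have hk : 1 ≤ k := Nat.one_le_ceil_iff.mpr hys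
  have hpow_le : (1 - m k) ^ n ≤ 1 := pow_le_one₀ (by linarith [hm1 k]) (by linarith [hm0 k])
  have hbernoulli : 1 - n * m k ≤ (1 - m k) ^ n := by
    simpa [sub_eq_add_neg] using one_add_mul_le_pow (a := -m k) (by linarith [hm1 k]) n
  have hmk : n * m k ≤ C * y ^ (-p) :=
    calc n * m k ≤ n * (C * (y * s) ^ (-p)) := by
          refine mul_le_mul_of_nonneg_left ((hC k hk).trans ?_) hn0.le
          exact mul_le_mul_of_nonneg_left
            (rpow_le_rpow_of_nonpos hys (Nat.le_ceil _) (by linarith)) hC0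
      _ = C * y ^ (-p) := by
          rw [mul_rpow hy.le (rpow_nonneg hn0.le _), ← rpow_mul hn0.le,
            one_div_mul_eq_div, neg_div, div_self hp.ne', rpow_neg_one]
          field_simp
  rw [Real.norm_of_nonneg (by linarith)]
  exact le_min (by linarith [pow_nonneg (sub_nonneg.mpr (hm1 k)) n]) (by linarith)

theorem tendsto_natCast_mul_natCeil (h : Tendsto (fun j : ℕ ↦ (j : ℝ) ^ p * m j) atTop (𝓝 a))
    (hp : 0 < p) {y : ℝ} (hy : 0 < y) :
    Tendsto (fun n : ℕ ↦ (n : ℝ) * m ⌈y * (n : ℝ) ^ (1 / p)⌉₊) atTop (𝓝 (a * y ^ (-p))) := by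
  have hk : Tendsto (fun n : ℕ ↦ ⌈y * (n : ℝ) ^ (1 / p)⌉₊) atTop atTop :=
    tendsto_nat_ceil_atTop.comp (tendsto_mul_natCast_rpow_atTop hp hy)
  have := (h.comp hk).mul ((tendsto_natCeil_mul_rpow_div hp hy).rpow_const (p := -p) (.inl hy.ne'))
  refine this.congr' ((eventually_ge_atTop 1).mono fun n hn ↦ ?_)
  have hn0 : (0 : ℝ) < n := by exact_mod_cast hn
  have hk0 : (0 : ℝ) < ⌈y * (n : ℝ) ^ (1 / p)⌉₊ :=
    Nat.cast_pos.mpr (Nat.ceil_pos.mpr (mul_pos hy (rpow_pos_of_pos hn0 _)))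
  simp only [Function.comp_apply]
  rw [div_rpow hk0.le (rpow_nonneg hn0.le _), ← rpow_mul hn0.le, one_div_mul_eq_div, neg_div,
    div_self hp.ne', rpow_neg hk0.le, rpow_neg hn0.le, rpow_one]
  field_simp

theorem tendsto_one_sub_one_sub_pow_natCeil
    (h : Tendsto (fun j : ℕ ↦ (j : ℝ) ^ p * m j) atTop (𝓝 a)) (hp : 0 < p) {y : ℝ} (hy : 0 < y) :
    Tendsto (fun n : ℕ ↦ 1 - (1 - m ⌈y * (n : ℝ) ^ (1 / p)⌉₊) ^ n) atTop
      (𝓝 (1 - exp (-(a * y ^ (-p))))) := by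
  have := tendsto_one_add_pow_exp_of_tendsto (g := fun n ↦ -m ⌈y * (n : ℝ) ^ (1 / p)⌉₊)
    (by simpa only [mul_neg] using (tendsto_natCast_mul_natCeil h hp hy).neg)
  simp only [← sub_eq_add_neg] at this
  exact tendsto_const_nhds.sub this

theorem tendsto_rpow_neg_mul_tsum_one_sub_one_sub_pow (hm0 : ∀ j, 0 ≤ m j) (hm1 : ∀ j, m j ≤ 1)
    (ha : 0 < a) (hp : 1 < p) (h : Tendsto (fun j : ℕ ↦ (j : ℝ) ^ p * m j) atTop (𝓝 a)) :
    Tendsto (fun n : ℕ ↦ (n : ℝ) ^ (-(1 / p)) * ∑' j : ℕ, (1 - (1 - m (j + 1)) ^ n)) atTop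
      (𝓝 (a ^ (1 / p) * Gamma (1 - 1 / p))) := by
  have hp0 : 0 < p := by linarith
  obtain ⟨C, hC0, hC⟩ := exists_le_mul_rpow_neg_of_tendsto h
  set F : ℕ → ℝ → ℝ := fun n y ↦ 1 - (1 - m ⌈y * (n : ℝ) ^ (1 / p)⌉₊) ^ n
  have hF_meas : ∀ n, AEStronglyMeasurable (F n) (volume.restrict (Set.Ioi 0)) := fun n ↦
    ((measurable_from_top (f := fun k : ℕ ↦ 1 - (1 - m k) ^ n)).comp
      (Nat.ceil_mono.comp (monotone_mul_right_of_nonneg (by positivity))).measurable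
      ).aestronglyMeasurable
  have hF_le : ∀ᶠ n in atTop, ∀ᵐ y ∂volume.restrict (Set.Ioi 0), ‖F n y‖ ≤ min 1 (C * y ^ (-p)) :=
    (eventually_ge_atTop 1).mono fun n hn ↦ (ae_restrict_iff' measurableSet_Ioi).mpr <|
      .of_forall fun y hy ↦ norm_one_sub_one_sub_pow_natCeil_le hm0 hm1 hC0 hC hp0 hn hy
  have hbound := integrableOn_Ioi_min_one_mul_rpow_neg hC0 hp
  have hlim := tendsto_integral_filter_of_dominated_convergence _ (.of_forall hF_meas) hF_le hbound
    ((ae_restrict_iff' measurableSet_Ioi).mpr <| .of_forall fun y hy ↦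
      tendsto_one_sub_one_sub_pow_natCeil h hp0 hy)
  rw [integral_Ioi_one_sub_exp_neg_mul_rpow_neg ha hp] at hlim
  refine hlim.congr' ?_
  filter_upwards [hF_le, eventually_ge_atTop 1] with n hn hn1
  rw [integral_Ioi_natCeil_mul (g := fun k ↦ 1 - (1 - m k) ^ n)
    (rpow_pos_of_pos (Nat.cast_pos.mpr hn1) _) (.mono' hbound (hF_meas n) hn),
    smul_eq_mul, rpow_neg (Nat.cast_nonneg n)]

end Sequence

section Moment

variable {f : ℝ → ℝ} {c β : ℝ}

theorem exists_abs_le_mul_one_sub_rpow (hf_cont : ContinuousOn f (Set.Icc 0 1)) (hβ : 0 ≤ β)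
    (hf_lim : Tendsto (fun x ↦ f x / (1 - x) ^ β) (𝓝[<] 1) (𝓝 c)) :
    ∃ M, ∀ x ∈ Set.Ico (0 : ℝ) 1, |f x| ≤ M * (1 - x) ^ β := by
  obtain ⟨B, hB⟩ := isCompact_Icc.exists_bound_of_continuousOn hf_cont
  obtain ⟨x₀, hx₀, hnear⟩ := mem_nhdsLT_iff_exists_Ioo_subset.mp
    (hf_lim.abs.eventually (eventually_lt_nhds (lt_add_one |c|)))
  refine ⟨max (|c| + 1) (B * (1 - x₀) ^ (-β)), fun x hx ↦ ?_⟩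
  have hx1 : 0 < 1 - x := sub_pos.mpr hx.2
  have hpos : 0 < (1 - x) ^ β := rpow_pos_of_pos hx1 β
  rcases lt_or_ge x₀ x with hx₀x | hxx₀
  · have : |f x / (1 - x) ^ β| < |c| + 1 := hnear ⟨hx₀x, hx.2⟩
    rw [abs_div, abs_of_pos hpos, div_lt_iff₀ hpos] at this
    exact this.le.trans (mul_le_mul_of_nonneg_right (le_max_left _ _) hpos.le)
  · have hx₀1 : 0 < 1 - x₀ := sub_pos.mpr hx₀
    calc |f x| ≤ B * ((1 - x₀) ^ (-β) * (1 - x₀) ^ β) := by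
          rw [← rpow_add hx₀1, neg_add_cancel, rpow_zero, mul_one]
          exact hB x (Set.Ico_subset_Icc_self hx)
      _ ≤ B * ((1 - x₀) ^ (-β) * (1 - x) ^ β) := by
          have hB0 : 0 ≤ B := (norm_nonneg _).trans (hB x (Set.Ico_subset_Icc_self hx))
          gcongr
      _ ≤ max (|c| + 1) (B * (1 - x₀) ^ (-β)) * (1 - x) ^ β := by
          rw [← mul_assoc]
          exact mul_le_mul_of_nonneg_right (le_max_right _ _) hpos.le

noncomputable def momentIntegrand (f : ℝ → ℝ) (β : ℝ) (j : ℕ) : ℝ → ℝ :=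
  (Set.Ioc 0 (j : ℝ)).indicator fun u ↦ (1 - u / j) ^ j * ((j : ℝ) ^ β * f (1 - u / j))

theorem rpow_mul_integral_pow_mul_eq {j : ℕ} (hj : 0 < j) :
    (j : ℝ) ^ (β + 1) * ∫ x in Set.Icc (0 : ℝ) 1, x ^ j * f x =
      ∫ u in Set.Ioi 0, momentIntegrand f β j u := by
  have hj0 : (0 : ℝ) < j := by exact_mod_cast hj
  rw [momentIntegrand, integral_indicator measurableSet_Ioc,
    Measure.restrict_restrict measurableSet_Ioc, Set.inter_eq_left.mpr Set.Ioc_subset_Ioi_self,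
    ← intervalIntegral.integral_of_le hj0.le, integral_Icc_eq_integral_Ioc,
    ← intervalIntegral.integral_of_le zero_le_one,
    intervalIntegral.integral_comp_div (fun u ↦ (1 - u) ^ j * ((j : ℝ) ^ β * f (1 - u))) hj0.ne']
  have hflip : ∫ x in (0 : ℝ)..1, x ^ j * f x = ∫ x in (0 : ℝ)..1, (1 - x) ^ j * f (1 - x) := by
    simpa using (intervalIntegral.integral_comp_sub_left (a := 0) (b := 1)
      (fun x ↦ x ^ j * f x) (1 : ℝ)).symm
  simp_rw [zero_div, div_self hj0.ne', smul_eq_mul, mul_left_comm _ ((j : ℝ) ^ β),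
    intervalIntegral.integral_const_mul, hflip, rpow_add_one hj0.ne']
  ring

theorem norm_momentIntegrand_le {M : ℝ} (hM : ∀ x ∈ Set.Ico (0 : ℝ) 1, |f x| ≤ M * (1 - x) ^ β)
    (j : ℕ) {u : ℝ} (hu : 0 < u) :
    ‖momentIntegrand f β j u‖ ≤ M * (exp (-u) * u ^ β) := by
  have hM0 : 0 ≤ M := by simpa using (abs_nonneg _).trans (hM 0 ⟨le_rfl, zero_lt_one⟩)
  by_cases huj : u ∈ Set.Ioc 0 (j : ℝ)
  · have hj0 : (0 : ℝ) < j := hu.trans_le huj.2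
    have hx : 1 - u / j ∈ Set.Ico (0 : ℝ) 1 :=
      ⟨sub_nonneg.mpr ((div_le_one hj0).mpr huj.2), sub_lt_self _ (div_pos hu hj0)⟩
    have hf : |f (1 - u / j)| ≤ M * (u / j) ^ β := by simpa using hM _ hx
    rw [momentIntegrand, Set.indicator_of_mem huj, norm_mul, norm_pow, Real.norm_of_nonneg hx.1,
      norm_mul, Real.norm_of_nonneg (rpow_nonneg hj0.le _), Real.norm_eq_abs]
    calc (1 - u / j) ^ j * ((j : ℝ) ^ β * |f (1 - u / j)|)
        ≤ exp (-u) * ((j : ℝ) ^ β * (M * (u / j) ^ β)) :=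
          mul_le_mul (one_sub_div_pow_le_exp_neg huj.2)
            (mul_le_mul_of_nonneg_left hf (rpow_nonneg hj0.le _)) (by positivity) (exp_pos _).le
      _ = M * (exp (-u) * u ^ β) := by
          rw [div_rpow hu.le hj0.le]
          field_simp
  · rw [momentIntegrand, Set.indicator_of_notMem huj, norm_zero]
    positivity

theorem tendsto_momentIntegrand (hf_lim : Tendsto (fun x ↦ f x / (1 - x) ^ β) (𝓝[<] 1) (𝓝 c))
    {u : ℝ} (hu : 0 < u) :
    Tendsto (fun j : ℕ ↦ momentIntegrand f β j u) atTop (𝓝 (c * (exp (-u) * u ^ β))) := by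
  have hpow : Tendsto (fun j : ℕ ↦ (1 - u / j) ^ j) atTop (𝓝 (exp (-u))) := by
    simpa [neg_div, ← sub_eq_add_neg] using tendsto_one_add_div_pow_exp (-u)
  have hx : Tendsto (fun j : ℕ ↦ 1 - u / j) atTop (𝓝[<] 1) := by
    refine tendsto_nhdsWithin_iff.mpr ⟨?_, (eventually_gt_atTop 0).mono fun j hj ↦ ?_⟩
    · simpa using tendsto_const_nhds.sub (tendsto_const_div_atTop_nhds_zero_nat u)
    · exact sub_lt_self _ (div_pos hu (Nat.cast_pos.mpr hj))
  have hratio : Tendsto (fun j : ℕ ↦ f (1 - u / j) / (u / j) ^ β) atTop (𝓝 c) := by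
    simpa [Function.comp_def] using hf_lim.comp hx
  have := hpow.mul (hratio.const_mul (u ^ β))
  rw [show exp (-u) * (u ^ β * c) = c * (exp (-u) * u ^ β) by ring] at this
  refine this.congr' ((eventually_gt_atTop ⌈u⌉₊).mono fun j hj ↦ ?_)
  have huj : u < j := Nat.lt_of_ceil_lt hj
  have hj0 : (0 : ℝ) < j := hu.trans huj
  dsimp only
  rw [momentIntegrand, Set.indicator_of_mem (Set.mem_Ioc.mpr ⟨hu, huj.le⟩), div_rpow hu.le hj0.le]
  field_simp

theorem aestronglyMeasurable_momentIntegrand (hf_cont : ContinuousOn f (Set.Icc 0 1)) (j : ℕ) :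
    AEStronglyMeasurable (momentIntegrand f β j) (volume.restrict (Set.Ioi 0)) := by
  have hmaps : Set.MapsTo (fun u : ℝ ↦ 1 - u / j) (Set.Ioc 0 j) (Set.Icc 0 1) := fun u hu ↦ by
    have hj0 : (0 : ℝ) < j := hu.1.trans_le hu.2
    exact ⟨sub_nonneg.mpr ((div_le_one hj0).mpr hu.2), sub_le_self _ (div_pos hu.1 hj0).le⟩
  have hcont : ContinuousOn (fun u : ℝ ↦ (1 - u / j) ^ j * ((j : ℝ) ^ β * f (1 - u / j)))
      (Set.Ioc 0 j) :=
    (by fun_prop : Continuous fun u : ℝ ↦ (1 - u / j) ^ j).continuousOn.mul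
      (continuousOn_const.mul (hf_cont.comp (by fun_prop) hmaps))
  exact ((aestronglyMeasurable_indicator_iff measurableSet_Ioc).mpr
    (hcont.aestronglyMeasurable measurableSet_Ioc)).restrict

theorem tendsto_rpow_mul_integral_pow_mul (hβ : 0 ≤ β) (hf_cont : ContinuousOn f (Set.Icc 0 1))
    (hf_lim : Tendsto (fun x ↦ f x / (1 - x) ^ β) (𝓝[<] 1) (𝓝 c)) :
    Tendsto (fun j : ℕ ↦ (j : ℝ) ^ (β + 1) * ∫ x in Set.Icc (0 : ℝ) 1, x ^ j * f x) atTop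
      (𝓝 (c * Gamma (β + 1))) := by
  obtain ⟨M, hM⟩ := exists_abs_le_mul_one_sub_rpow hf_cont hβ hf_lim
  have hGamma_int : IntegrableOn (fun u ↦ exp (-u) * u ^ β) (Set.Ioi 0) := by
    simpa using GammaIntegral_convergent (s := β + 1) (by linarith)
  have hlim := tendsto_integral_filter_of_dominated_convergence _
    (.of_forall (aestronglyMeasurable_momentIntegrand hf_cont))
    (.of_forall fun j ↦ (ae_restrict_iff' measurableSet_Ioi).mpr <|
      .of_forall fun u hu ↦ norm_momentIntegrand_le hM j hu)
    (hGamma_int.const_mul M)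
    ((ae_restrict_iff' measurableSet_Ioi).mpr <|
      .of_forall fun u hu ↦ tendsto_momentIntegrand hf_lim hu)
  have hGamma : Gamma (β + 1) = ∫ u in Set.Ioi 0, exp (-u) * u ^ β := by
    simpa using Gamma_eq_integral (s := β + 1) (by linarith)
  rw [integral_const_mul, ← hGamma] at hlim
  exact hlim.congr' ((eventually_gt_atTop 0).mono fun j hj ↦ (rpow_mul_integral_pow_mul_eq hj).symm)

end Moment

/-- Let `μ` be a probability measure on `[0,1]` with
continuous density `f` with respect to Lebesgue measure, and suppose
`f(x)/(1-x)^β → c > 0` as `x → 1⁻`, with `β > 0`.  Then, with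
`ζ_μ(k) = ∑_{j≥1} (m j)^k` the moment zeta function (`m j` the `j`-th moment),
`n^(-1/(1+β)) ∑_{k=1}^n (-1)^k C(n,k) ζ_μ(k)
  → -(c Γ(β+1))^(1/(β+1)) Γ(β/(β+1))` as `n → ∞`. -/
theorem stmt_10 (f : ℝ → ℝ) (c β : ℝ) (hc : 0 < c) (hβ : 0 < β)
    (hf_cont : ContinuousOn f (Set.Icc (0 : ℝ) 1))
    (hf_nonneg : ∀ x ∈ Set.Icc (0 : ℝ) 1, 0 ≤ f x)
    (hf_prob : ∫ x in Set.Icc (0 : ℝ) 1, f x = 1)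
    (hf_lim : Tendsto (fun x : ℝ => f x / (1 - x) ^ β)
      (nhdsWithin 1 (Set.Iio 1)) (𝓝 c))
    (m : ℕ → ℝ) (hm : ∀ j, m j = ∫ x in Set.Icc (0 : ℝ) 1, x ^ j * f x) :
    Tendsto (fun n : ℕ => (n : ℝ) ^ (-(1 / (1 + β))) *
        ∑ k ∈ Icc 1 n, (-1 : ℝ) ^ k * (n.choose k : ℝ) * ∑' j : ℕ, m (j + 1) ^ k)
      atTop
      (𝓝 (-((c * Real.Gamma (β + 1)) ^ (1 / (β + 1))
        * Real.Gamma (β / (β + 1))))) := by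
  have hm0 : ∀ j, 0 ≤ m j := fun j ↦ (hm j).symm ▸ setIntegral_nonneg measurableSet_Icc
    fun x hx ↦ mul_nonneg (pow_nonneg hx.1 j) (hf_nonneg x hx)
  have hm1 : ∀ j, m j ≤ 1 := fun j ↦ by
    rw [hm]
    refine (setIntegral_mono_on ?_ (hf_cont.integrableOn_compact isCompact_Icc) measurableSet_Icc
      fun x hx ↦ mul_le_of_le_one_left (hf_nonneg x hx) (pow_le_one₀ hx.1 hx.2)).trans_eq hf_prob
    exact ((continuousOn_pow j).mul hf_cont).integrableOn_compact isCompact_Icc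
  have hmom : Tendsto (fun j : ℕ ↦ (j : ℝ) ^ (1 + β) * m j) atTop (𝓝 (c * Gamma (β + 1))) := by
    simpa only [hm, add_comm β] using tendsto_rpow_mul_integral_pow_mul hβ.le hf_cont hf_lim
  have hp : 1 < 1 + β := by linarith
  have hlim := tendsto_rpow_neg_mul_tsum_one_sub_one_sub_pow hm0 hm1
    (mul_pos hc (Gamma_pos_of_pos (by linarith))) hp hmom
  have hlimit : (c * Gamma (β + 1)) ^ (1 / (1 + β)) * Gamma (1 - 1 / (1 + β)) =
      (c * Gamma (β + 1)) ^ (1 / (β + 1)) * Gamma (β / (β + 1)) := by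
    rw [add_comm 1 β, one_sub_div (by positivity), add_sub_cancel_right]
  rw [← hlimit]
  refine hlim.neg.congr fun n ↦ ?_
  rw [sum_Icc_neg_one_pow_mul_choose_mul_tsum_pow
    (fun k hk ↦ summable_pow_succ_of_tendsto hm0 hm1 hp hmom hk), mul_neg]
end

section
/- Let L > 0 and let m : [1, ∞) → [0, 1] be a monotonically decreasing function with lim_{x→∞} x m(x) = L. Then lim_{n→∞} (1/(n log n)) ∫_1^∞ [(1 − m(x))^n − 1 + n m(x)] dx = L. -/
open MeasureTheory Filter
open scoped Topology
open Real Set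

/-! With `u = m x`, the integrand `(1 - u) ^ n - 1 + n u` lies between `n u - 1` and `n u`,
and is at most `n² u² / 2`. As `m x ≤ C / x`, the quadratic bound makes the part of the
integral over `x > n` at most `n C² / 2`, so the integral is `n ∫₁ⁿ m + O(n)`. Finally
`∫₁ⁿ m ~ L log n`, since `∫₁ⁿ m = ∫₁ⁿ (x m x) dx / x` averages `x m x → L` against the
measure `dx / x`, whose total mass `log n` tends to infinity. -/

lemma one_sub_pow_sub_one_add_mul_nonneg {u : ℝ} (hu : u ≤ 2) (n : ℕ) :
    0 ≤ (1 - u) ^ n - 1 + n * u := by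
  have := one_add_mul_le_pow (a := -u) (by linarith) n
  rw [← sub_eq_add_neg] at this
  linarith

lemma one_sub_pow_sub_one_add_mul_le_mul {u : ℝ} (hu₀ : 0 ≤ u) (hu₁ : u ≤ 1) (n : ℕ) :
    (1 - u) ^ n - 1 + n * u ≤ n * u := by
  linarith [pow_le_one₀ (n := n) (sub_nonneg.2 hu₁) (sub_le_self 1 hu₀)]

lemma one_sub_pow_sub_one_add_mul_le_sq {u : ℝ} (hu₀ : 0 ≤ u) (hu₁ : u ≤ 1) (n : ℕ) :
    (1 - u) ^ n - 1 + n * u ≤ n ^ 2 * u ^ 2 / 2 := by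
  induction n with
  | zero => simp
  | succ n ih =>
    have h := mul_le_mul_of_nonneg_right ih (sub_nonneg.2 hu₁)
    rw [pow_succ]
    push_cast
    nlinarith [mul_nonneg (mul_nonneg (sq_nonneg (n : ℝ)) hu₀) (mul_nonneg hu₀ hu₀)]

lemma mul_log_div_le_integral {m : ℝ → ℝ} {c X b : ℝ} (hX : 0 < X) (hXb : X ≤ b)
    (hm : IntervalIntegrable m volume X b) (h : ∀ x ∈ Icc X b, c ≤ x * m x) :
    c * log (b / X) ≤ ∫ x in X..b, m x := by
  have hinv : ∀ x ∈ uIcc X b, 0 < x := fun x hx => hX.trans_le (by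
    rw [uIcc_of_le hXb] at hx; exact hx.1)
  rw [← integral_inv_of_pos hX (hX.trans_le hXb), ← intervalIntegral.integral_const_mul]
  refine intervalIntegral.integral_mono_on hXb
    ((intervalIntegral.intervalIntegrable_inv (fun x hx => (hinv x hx).ne')
      continuousOn_id).const_mul c) hm fun x hx => ?_
  rw [← div_eq_mul_inv, div_le_iff₀ (hinv x (by rwa [uIcc_of_le hXb])), mul_comm]
  exact h x hx

lemma eventually_lt_integral_div_log {m : ℝ → ℝ} {a c L : ℝ}
    (hint : ∀ b, a ≤ b → IntervalIntegrable m volume a b)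
    (hlim : Tendsto (fun x => x * m x) atTop (𝓝 L)) (hc : c < L) :
    ∀ᶠ b in atTop, c < (∫ x in a..b, m x) / log b := by
  obtain ⟨c', hcc', hc'L⟩ := exists_between hc
  obtain ⟨X₀, hX₀⟩ := eventually_atTop.1 (hlim.eventually (eventually_ge_nhds hc'L))
  set X := max X₀ (max a 1)
  have hX : 0 < X := zero_lt_one.trans_le (le_max_of_le_right (le_max_right _ _))
  have haX : a ≤ X := le_max_of_le_right (le_max_left _ _)
  set A := ∫ x in a..X, m x
  have hlim' : Tendsto (fun b => c' + (A - c' * log X) / log b) atTop (𝓝 c') := by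
    simpa using tendsto_const_nhds.add (tendsto_const_nhds.div_atTop tendsto_log_atTop)
  filter_upwards [hlim'.eventually (lt_mem_nhds hcc'), eventually_ge_atTop X,
    eventually_gt_atTop 1] with b hcb hXb hb
  have hXb_int : IntervalIntegrable m volume X b :=
    (hint X haX).symm.trans (hint b (haX.trans hXb))
  have hsplit : ∫ x in a..b, m x = A + ∫ x in X..b, m x :=
    (intervalIntegral.integral_add_adjacent_intervals (hint X haX) hXb_int).symm
  have htail := mul_log_div_le_integral hX hXb hXb_int
    fun x hx => hX₀ x ((le_max_left _ _).trans hx.1)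
  rw [log_div (by linarith) hX.ne'] at htail
  have hlogb : 0 < log b := log_pos hb
  calc c < c' + (A - c' * log X) / log b := hcb
    _ = (A + c' * (log b - log X)) / log b := by field_simp; ring
    _ ≤ (∫ x in a..b, m x) / log b := by rw [hsplit]; gcongr

theorem tendsto_integral_div_log {m : ℝ → ℝ} {a L : ℝ}
    (hint : ∀ b, a ≤ b → IntervalIntegrable m volume a b)
    (hlim : Tendsto (fun x => x * m x) atTop (𝓝 L)) :
    Tendsto (fun b => (∫ x in a..b, m x) / log b) atTop (𝓝 L) := by
  refine tendsto_order.2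
    ⟨fun c hc => eventually_lt_integral_div_log hint hlim hc, fun c hc => ?_⟩
  have hneg := eventually_lt_integral_div_log (m := -m) (c := -c)
    (fun b hb => (hint b hb).neg) (by simpa using hlim.neg) (neg_lt_neg hc)
  filter_upwards [hneg] with b hb
  simp only [Pi.neg_apply, intervalIntegral.integral_neg, neg_div] at hb
  linarith

lemma exists_forall_le_div_of_tendsto_mul {m : ℝ → ℝ} {L : ℝ}
    (hm : ∀ x, 1 ≤ x → m x ≤ 1) (hlim : Tendsto (fun x => x * m x) atTop (𝓝 L)) :
    ∃ C, ∀ x, 1 ≤ x → m x ≤ C / x := by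
  obtain ⟨X, hX⟩ := eventually_atTop.1 (hlim.eventually (eventually_le_nhds (lt_add_one L)))
  refine ⟨max (L + 1) X, fun x hx => ?_⟩
  rw [le_div_iff₀ (by linarith), mul_comm]
  rcases le_total X x with hXx | hxX
  · exact (hX x hXx).trans (le_max_left _ _)
  · nlinarith [hm x hx, le_max_right (L + 1) X]

section

variable {m : ℝ → ℝ} {C : ℝ}

lemma one_sub_pow_sub_one_add_mul_le_rpow (hm : ∀ x, 1 ≤ x → m x ∈ Icc 0 1)
    (hC : ∀ x, 1 ≤ x → m x ≤ C / x) (n : ℕ) {x : ℝ} (hx : 1 ≤ x) :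
    (1 - m x) ^ n - 1 + n * m x ≤ n ^ 2 * C ^ 2 / 2 * x ^ (-2 : ℝ) := by
  have hx₀ : 0 < x := by linarith
  have hsq : m x ^ 2 ≤ C ^ 2 * x ^ (-2 : ℝ) := by
    rw [rpow_neg hx₀.le, rpow_two, ← div_eq_mul_inv, ← div_pow]
    exact pow_le_pow_left₀ (hm x hx).1 (hC x hx) 2
  calc (1 - m x) ^ n - 1 + n * m x ≤ n ^ 2 * m x ^ 2 / 2 :=
        one_sub_pow_sub_one_add_mul_le_sq (hm x hx).1 (hm x hx).2 n
    _ ≤ n ^ 2 * (C ^ 2 * x ^ (-2 : ℝ)) / 2 := by gcongr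
    _ = n ^ 2 * C ^ 2 / 2 * x ^ (-2 : ℝ) := by ring

lemma integrableOn_Ioi_one_sub_pow_sub_one_add_mul(hm : ∀ x, 1 ≤ x → m x ∈ Icc 0 1)
    (hmeas : AEStronglyMeasurable m (volume.restrict (Ioi 1)))
    (hC : ∀ x, 1 ≤ x → m x ≤ C / x) (n : ℕ) :
    IntegrableOn (fun x => (1 - m x) ^ n - 1 + n * m x) (Ioi 1) := by
  refine Integrable.mono'
    ((integrableOn_Ioi_rpow_of_lt (by norm_num : (-2 : ℝ) < -1) one_pos).const_mul
      (n ^ 2 * C ^ 2 / 2))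
    ((((aestronglyMeasurable_const.sub hmeas).pow n).sub aestronglyMeasurable_const).add
      (hmeas.const_mul n)) ?_
  filter_upwards [ae_restrict_mem measurableSet_Ioi] with x hx
  rw [Real.norm_of_nonneg (one_sub_pow_sub_one_add_mul_nonneg (by linarith [(hm x hx.le).2]) n)]
  exact one_sub_pow_sub_one_add_mul_le_rpow hm hC n hx.le

lemma intervalIntegrable_of_one_le (hm : ∀ x, 1 ≤ x → m x ∈ Icc 0 1)
    (hmeas : AEStronglyMeasurable m (volume.restrict (Ioi 1))) {b : ℝ} (hb : 1 ≤ b) :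
    IntervalIntegrable m volume 1 b := by
  refine (intervalIntegrable_iff_integrableOn_Ioc_of_le hb).2 <|
    Integrable.mono' (integrableOn_const (C := 1) measure_Ioc_lt_top.ne)
      (hmeas.mono_measure (Measure.restrict_mono Ioc_subset_Ioi_self le_rfl)) ?_
  filter_upwards [ae_restrict_mem measurableSet_Ioc] with x hx
  rw [Real.norm_of_nonneg (hm x hx.1.le).1]
  exact (hm x hx.1.le).2

lemma mul_integral_sub_le_integral_Ioi(hm : ∀ x, 1 ≤ x → m x ∈ Icc 0 1)
    (hmeas : AEStronglyMeasurable m (volume.restrict (Ioi 1)))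
    (hC : ∀ x, 1 ≤ x → m x ≤ C / x) {n : ℕ} (hn : 1 ≤ (n : ℝ)) :
    n * (∫ x in (1 : ℝ)..n, m x) - n ≤ ∫ x in Ioi 1, ((1 - m x) ^ n - 1 + n * m x) := by
  have hg := integrableOn_Ioi_one_sub_pow_sub_one_add_mul hm hmeas hC n
  have htail : 0 ≤ ∫ x in Ioi (n : ℝ), ((1 - m x) ^ n - 1 + n * m x) :=
    setIntegral_nonneg measurableSet_Ioi fun x hx =>
      one_sub_pow_sub_one_add_mul_nonneg (by linarith [(hm x (hn.trans hx.le)).2]) n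
  have hfinite : n * (∫ x in (1 : ℝ)..n, m x) - n ≤
      ∫ x in (1 : ℝ)..n, ((1 - m x) ^ n - 1 + n * m x) := by
    have hsub :
        ∫ x in (1 : ℝ)..n, (n * m x - 1) = n * (∫ x in (1 : ℝ)..n, m x) - (n - 1) := by
      rw [intervalIntegral.integral_sub ((intervalIntegrable_of_one_le hm hmeas hn).const_mul _)
        intervalIntegrable_const, intervalIntegral.integral_const_mul,
        intervalIntegral.integral_const, smul_eq_mul, mul_one]
    have hmono := intervalIntegral.integral_mono_on (f := fun x => n * m x - 1) hn
      (((intervalIntegrable_of_one_le hm hmeas hn).const_mul n).sub intervalIntegrable_const)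
      ((intervalIntegrable_iff_integrableOn_Ioc_of_le hn).2 (hg.mono_set Ioc_subset_Ioi_self))
      fun x hx => by linarith [pow_nonneg (sub_nonneg.2 (hm x hx.1).2) n]
    linarith
  rw [← intervalIntegral.integral_interval_add_Ioi hg (hg.mono_set (Ioi_subset_Ioi hn))]
  linarith

lemma integral_Ioi_le_mul_integral_add(hm : ∀ x, 1 ≤ x → m x ∈ Icc 0 1)
    (hmeas : AEStronglyMeasurable m (volume.restrict (Ioi 1)))
    (hC : ∀ x, 1 ≤ x → m x ≤ C / x) {n : ℕ} (hn : 1 ≤ (n : ℝ)) :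
    ∫ x in Ioi 1, ((1 - m x) ^ n - 1 + n * m x) ≤
      n * (∫ x in (1 : ℝ)..n, m x) + n * C ^ 2 / 2 := by
  have hg := integrableOn_Ioi_one_sub_pow_sub_one_add_mul hm hmeas hC n
  have hn₀ : (0 : ℝ) < n := by linarith
  have hfinite :
      ∫ x in (1 : ℝ)..n, ((1 - m x) ^ n - 1 + n * m x) ≤ n * ∫ x in (1 : ℝ)..n, m x := by
    rw [← intervalIntegral.integral_const_mul]
    exact intervalIntegral.integral_mono_on hn
      ((intervalIntegrable_iff_integrableOn_Ioc_of_le hn).2 (hg.mono_set Ioc_subset_Ioi_self))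
      ((intervalIntegrable_of_one_le hm hmeas hn).const_mul n)
      fun x hx => one_sub_pow_sub_one_add_mul_le_mul (hm x hx.1).1 (hm x hx.1).2 n
  have htail : ∫ x in Ioi (n : ℝ), ((1 - m x) ^ n - 1 + n * m x) ≤ n * C ^ 2 / 2 := by
    calc ∫ x in Ioi (n : ℝ), ((1 - m x) ^ n - 1 + n * m x)
        ≤ ∫ x in Ioi (n : ℝ), n ^ 2 * C ^ 2 / 2 * x ^ (-2 : ℝ) :=
          setIntegral_mono_on (hg.mono_set (Ioi_subset_Ioi hn))
            ((integrableOn_Ioi_rpow_of_lt (by norm_num) hn₀).const_mul _) measurableSet_Ioi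
            fun x hx => one_sub_pow_sub_one_add_mul_le_rpow hm hC n (hn.trans hx.le)
      _ = n * C ^ 2 / 2 := by
          rw [integral_const_mul, integral_Ioi_rpow_of_lt (by norm_num) hn₀]
          norm_num
          rw [rpow_neg_one]
          field_simp
  rw [← intervalIntegral.integral_interval_add_Ioi hg (hg.mono_set (Ioi_subset_Ioi hn))]
  linarith

end

theorem stmt_11_general (L : ℝ) (m : ℝ → ℝ)
    (hm_range : ∀ x, 1 ≤ x → m x ∈ Set.Icc (0 : ℝ) 1)
    (hm_anti : AntitoneOn m (Set.Ici (1 : ℝ)))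
    (hm_lim : Tendsto (fun x : ℝ => x * m x) atTop (𝓝 L)) :
    Tendsto (fun n : ℕ => (1 / ((n : ℝ) * Real.log n)) *
        ∫ x in Set.Ioi (1 : ℝ), ((1 - m x) ^ n - 1 + n * m x))
      atTop (𝓝 L) := by
  have hmeas : AEStronglyMeasurable m (volume.restrict (Ioi 1)) :=
    (aemeasurable_restrict_of_antitoneOn measurableSet_Ioi
      (hm_anti.mono Ioi_subset_Ici_self)).aestronglyMeasurable
  obtain ⟨C, hC⟩ := exists_forall_le_div_of_tendsto_mul (fun x hx => (hm_range x hx).2) hm_lim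
  have hJ : Tendsto (fun n : ℕ => (∫ x in (1 : ℝ)..n, m x) / log n) atTop (𝓝 L) :=
    (tendsto_integral_div_log (fun _ => intervalIntegrable_of_one_le hm_range hmeas)
      hm_lim).comp tendsto_natCast_atTop_atTop
  have hlog : Tendsto (fun n : ℕ => (log n)⁻¹) atTop (𝓝 0) :=
    (tendsto_log_atTop.comp tendsto_natCast_atTop_atTop).inv_tendsto_atTop
  refine tendsto_of_tendsto_of_tendsto_of_le_of_le' (by simpa using hJ.sub hlog)
    (by simpa using hJ.add (hlog.const_mul (C ^ 2 / 2))) ?_ ?_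
  all_goals
    filter_upwards [eventually_gt_atTop 1] with n hn
    have hn₁ : (1 : ℝ) < n := by exact_mod_cast hn
    have hlogn : 0 < log n := log_pos hn₁
    rw [one_div_mul_eq_div]
  · calc (∫ x in (1 : ℝ)..n, m x) / log n - (log n)⁻¹
        = (n * (∫ x in (1 : ℝ)..n, m x) - n) / (n * log n) := by field_simp
      _ ≤ _ := by gcongr; exact mul_integral_sub_le_integral_Ioi hm_range hmeas hC hn₁.le
  · calc _ ≤ (n * (∫ x in (1 : ℝ)..n, m x) + n * C ^ 2 / 2) / (n * log n) := by
          gcongr; exact integral_Ioi_le_mul_integral_add hm_range hmeas hC hn₁.le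
      _ = (∫ x in (1 : ℝ)..n, m x) / log n + C ^ 2 / 2 * (log n)⁻¹ := by field_simp

/-- Let `L > 0` and let `m : [1,∞) → [0,1]` be monotonically
decreasing with `x m(x) → L` as `x → ∞`.  Then
`(1/(n log n)) ∫_1^∞ [(1 - m x)^n - 1 + n m x] dx → L` as `n → ∞`. -/
theorem stmt_11 (L : ℝ) (hL : 0 < L) (m : ℝ → ℝ)
    (hm_range : ∀ x, 1 ≤ x → m x ∈ Set.Icc (0 : ℝ) 1)
    (hm_anti : AntitoneOn m (Set.Ici (1 : ℝ)))
    (hm_lim : Tendsto (fun x : ℝ => x * m x) atTop (𝓝 L)) :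
    Tendsto (fun n : ℕ => (1 / ((n : ℝ) * Real.log n)) *
        ∫ x in Set.Ioi (1 : ℝ), ((1 - m x) ^ n - 1 + n * m x))
      atTop (𝓝 L) :=
  stmt_11_general L m hm_range hm_anti hm_lim
end

section
/- Let μ be a probability measure on [0, 1] with continuous density f with respect to Lebesgue measure, and suppose lim_{x→1⁻} f(x) = c for some c > 0. Then, with ζ_μ(k) = ∑_{j=1}^∞ m_j^k the moment zeta function of μ (which is finite for every integer k ≥ 2), lim_{n→∞} (1/(n log n)) ∑_{k=2}^n (−1)^k C(n,k) ζ_μ(k) = c. -/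
/-!
By the binomial theorem, `∑_{k=2}^n (-1)^k C(n,k) t^k = (1 - t)^n - (1 - n t)` is the gap in
Bernoulli's inequality, so the alternating sum equals `∑_j gap_n(m_{j+1})`. An Abelian argument
(the densities `(j + 1) x^j` concentrate at `1`) gives `m_j ~ c / j`. The gap lies between
`n t - 1` and `min (n t) ((n t)^2 / 2)`, so the terms `j < n` contribute `c n H_n + O(n)` and the
terms `j ≥ n` only `O(n)`; since `H_n ~ log n`, the sum is `~ c n log n`.
-/

open MeasureTheory Filter Finset Real
open scoped Topology

def bernoulliGap (n : ℕ) (t : ℝ) : ℝ := (1 - t) ^ n - (1 - n * t)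

theorem sum_Icc_two_neg_one_pow_mul_choose_mul_pow {R : Type*} [CommRing R] (n : ℕ) (t : R) :
    ∑ k ∈ Icc 2 n, (-1) ^ k * (n.choose k : R) * t ^ k = (1 - t) ^ n - (1 - n * t) := by
  rcases n with _ | n
  · simp
  calc ∑ k ∈ Icc 2 (n + 1), (-1) ^ k * ((n + 1).choose k : R) * t ^ k
      = ∑ k ∈ Ico 2 (n + 2), (-t) ^ k * 1 ^ (n + 1 - k) * ((n + 1).choose k : R) := by
        rw [← Ico_add_one_right_eq_Icc]
        exact sum_congr rfl fun k _ => by rw [neg_pow, one_pow]; ring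
    _ = (-t + 1) ^ (n + 1)
          - ∑ k ∈ range 2, (-t) ^ k * 1 ^ (n + 1 - k) * ((n + 1).choose k : R) := by
        rw [add_pow, ← sum_range_add_sum_Ico _ (by omega : 2 ≤ n + 2)]
        ring
    _ = (1 - t) ^ (n + 1) - (1 - ((n + 1 : ℕ) : R) * t) := by
        simp only [one_pow, mul_one, sum_range_succ, range_one, sum_singleton, pow_zero,
          Nat.choose_zero_right, Nat.cast_one, pow_one, Nat.choose_one_right, Nat.cast_add, neg_mul]
        ring

section bernoulliGap

variable (n : ℕ) {t : ℝ}

theorem bernoulliGap_nonneg (ht : t ≤ 2) : 0 ≤ bernoulliGap n t := by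
  have := one_add_mul_le_pow (a := -t) (by linarith) n
  rw [← sub_eq_add_neg, mul_neg, ← sub_eq_add_neg] at this
  rw [bernoulliGap]
  linarith

theorem bernoulliGap_le_mul (h0 : 0 ≤ t) (h2 : t ≤ 2) : bernoulliGap n t ≤ n * t := by
  have : (1 - t) ^ n ≤ 1 := by
    refine (le_abs_self _).trans ?_
    rw [abs_pow]
    exact pow_le_one₀ (abs_nonneg _) (abs_le.2 ⟨by linarith, by linarith⟩)
  rw [bernoulliGap]
  linarith

theorem mul_sub_one_le_bernoulliGap (ht : t ≤ 1) : n * t - 1 ≤ bernoulliGap n t := by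
  have : 0 ≤ (1 - t) ^ n := pow_nonneg (by linarith) n
  rw [bernoulliGap]
  linarith

theorem bernoulliGap_le_sq (h0 : 0 ≤ t) (h1 : t ≤ 1) :
    bernoulliGap n t ≤ (n * t) ^ 2 / 2 := by
  induction n with
  | zero => simp [bernoulliGap]
  | succ n ih =>
    rw [bernoulliGap] at ih ⊢
    have := mul_le_mul_of_nonneg_left ih (sub_nonneg.2 h1)
    rw [pow_succ]
    push_cast
    nlinarith [mul_nonneg (sq_nonneg (n : ℝ)) (pow_nonneg h0 3), sq_nonneg t]

end bernoulliGap

theorem summable_bernoulliGap {x : ℕ → ℝ} (hx0 : ∀ j, 0 ≤ x j) (hx1 : ∀ j, x j ≤ 1)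
    (hx : Summable fun j => x j ^ 2) (n : ℕ) : Summable fun j => bernoulliGap n (x j) :=
  (hx.mul_left ((n : ℝ) ^ 2 / 2)).of_nonneg_of_le
    (fun j => bernoulliGap_nonneg n (by linarith [hx1 j]))
    fun j => (bernoulliGap_le_sq n (hx0 j) (hx1 j)).trans_eq (by ring)

theorem tendsto_mul_harmonic_add_div_log (a C : ℝ) :
    Tendsto (fun n : ℕ => (a * harmonic n + C) / log n) atTop (𝓝 a) := by
  have hlog : Tendsto (fun n : ℕ => log n) atTop atTop :=
    tendsto_log_atTop.comp tendsto_natCast_atTop_atTop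
  have := (((tendsto_harmonic_sub_log.const_mul a).add_const C).div_atTop hlog).const_add a
  rw [add_zero] at this
  refine this.congr' ?_
  filter_upwards [eventually_gt_atTop 1] with n hn
  have : log n ≠ 0 := (log_pos (by exact_mod_cast hn)).ne'
  field_simp
  ring

theorem exists_sum_range_le_mul_harmonic_add {x : ℕ → ℝ} {a : ℝ}
    (h : ∀ᶠ j in atTop, x j ≤ a / (j + 1)) :
    ∃ C, ∀ n, ∑ j ∈ range n, x j ≤ a * harmonic n + C := by
  obtain ⟨J, hJ⟩ := eventually_atTop.1 h
  set y : ℕ → ℝ := fun j => x j - a / (j + 1)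
  refine ⟨∑ j ∈ range J, |y j|, fun n => ?_⟩
  have harm : a * harmonic n = ∑ j ∈ range n, a / (j + 1) := by
    simp [harmonic, mul_sum, div_eq_mul_inv]
  have hy : ∑ j ∈ range n, y j ≤ ∑ j ∈ range J, |y j| := by
    rw [← sum_range_add_sum_Ico y (min_le_left n J)]
    have tail : ∑ j ∈ Ico (min n J) n, y j ≤ 0 :=
      sum_nonpos fun j hj => by
        have := hJ j (by simp only [mem_Ico] at hj; omega)
        simp only [y]
        linarith
    have head : ∑ j ∈ range (min n J), y j ≤ ∑ j ∈ range J, |y j| :=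
      (sum_le_sum fun j _ => le_abs_self (y j)).trans
        (sum_le_sum_of_subset_of_nonneg (range_subset_range.2 (min_le_right n J))
          fun j _ _ => abs_nonneg _)
    linarith
  rw [harm]
  simp only [y, sum_sub_distrib] at hy
  linarith

theorem sum_range_inv_add_succ_sq_le (n N : ℕ) :
    ∑ j ∈ range N, (((j + n + 1 : ℕ) : ℝ) ^ 2)⁻¹ ≤ 2 / (n + 1) := by
  have := sum_Ico_add' (fun i : ℕ => ((i : ℝ) ^ 2)⁻¹) 0 N (n + 1)
  rw [zero_add, Ico_add_one_left_eq_Ioo, ← range_eq_Ico] at this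
  simp only [← add_assoc] at this
  rw [this]
  exact sum_Ioo_inv_sq_le n _

section

variable {x : ℕ → ℝ} {a b c : ℝ}

theorem eventually_le_div_succ_of_tendsto
    (hx : Tendsto (fun j : ℕ => ((j : ℝ) + 1) * x j) atTop (𝓝 c)) (ha : c < a) :
    ∀ᶠ j : ℕ in atTop, x j ≤ a / (j + 1) :=
  (hx.eventually (gt_mem_nhds ha)).mono fun j hj => by
    rw [le_div_iff₀ (by positivity)]
    linarith

theorem eventually_div_succ_le_of_tendsto
    (hx : Tendsto (fun j : ℕ => ((j : ℝ) + 1) * x j) atTop (𝓝 c)) (hb : b < c) :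
    ∀ᶠ j : ℕ in atTop, b / (j + 1) ≤ x j :=
  (hx.eventually (lt_mem_nhds hb)).mono fun j hj => by
    rw [div_le_iff₀ (by positivity)]
    linarith

theorem summable_sq_of_eventually_le_div_succ (hx0 : ∀ j, 0 ≤ x j)
    (ha : ∀ᶠ j : ℕ in atTop, x j ≤ a / (j + 1)) : Summable fun j => x j ^ 2 := by
  have hsum : Summable fun j : ℕ => a ^ 2 * ((((j + 1 : ℕ) : ℝ)) ^ 2)⁻¹ :=
    ((summable_nat_add_iff 1).2 (Real.summable_nat_pow_inv.2 one_lt_two)).mul_left _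
  refine hsum.of_norm_bounded_eventually_nat (ha.mono fun j hj => ?_)
  rw [Real.norm_eq_abs, abs_of_nonneg (sq_nonneg _)]
  calc x j ^ 2 ≤ (a / (j + 1)) ^ 2 := pow_le_pow_left₀ (hx0 j) hj 2
    _ = a ^ 2 * ((((j + 1 : ℕ) : ℝ)) ^ 2)⁻¹ := by push_cast; field_simp

theorem tsum_bernoulliGap_nat_add_le (hx0 : ∀ j, 0 ≤ x j) (hx1 : ∀ j, x j ≤ 1) {J n : ℕ}
    (hJ : ∀ j, J ≤ j → x j ≤ a / (j + 1)) (hn : J ≤ n) :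
    ∑' j, bernoulliGap n (x (j + n)) ≤ n * a ^ 2 := by
  refine Real.tsum_le_of_sum_range_le
    (fun j => bernoulliGap_nonneg n (by linarith [hx1 (j + n)])) fun N => ?_
  calc ∑ j ∈ range N, bernoulliGap n (x (j + n))
      ≤ ∑ j ∈ range N, (n : ℝ) ^ 2 * a ^ 2 / 2 * (((j + n + 1 : ℕ) : ℝ) ^ 2)⁻¹ :=
        sum_le_sum fun j _ => by
          have hxj : n * x (j + n) ≤ n * (a / ((j + n : ℕ) + 1)) :=
            mul_le_mul_of_nonneg_left (hJ _ (by omega)) n.cast_nonneg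
          calc bernoulliGap n (x (j + n)) ≤ (n * x (j + n)) ^ 2 / 2 :=
                bernoulliGap_le_sq n (hx0 _) (hx1 _)
            _ ≤ (n * (a / ((j + n : ℕ) + 1))) ^ 2 / 2 := by
                gcongr
                exact mul_nonneg n.cast_nonneg (hx0 _)
            _ = _ := by push_cast; field_simp
    _ = (n : ℝ) ^ 2 * a ^ 2 / 2 * ∑ j ∈ range N, (((j + n + 1 : ℕ) : ℝ) ^ 2)⁻¹ := by
        rw [mul_sum]
    _ ≤ (n : ℝ) ^ 2 * a ^ 2 / 2 * (2 / (n + 1)) := by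
        gcongr
        exact sum_range_inv_add_succ_sq_le n N
    _ ≤ n * a ^ 2 := by
        rw [mul_div_assoc', div_le_iff₀ (by positivity)]
        nlinarith [sq_nonneg a, mul_nonneg (n.cast_nonneg : (0 : ℝ) ≤ n) (sq_nonneg a)]

variable (hx0 : ∀ j, 0 ≤ x j) (hx1 : ∀ j, x j ≤ 1) (hs : Summable fun j => x j ^ 2)
include hx0 hx1 hs

theorem exists_tsum_bernoulliGap_le (ha : ∀ᶠ j : ℕ in atTop, x j ≤ a / (j + 1)) :
    ∃ C, ∀ᶠ n : ℕ in atTop, ∑' j, bernoulliGap n (x j) ≤ n * (a * harmonic n + C) := by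
  obtain ⟨C, hC⟩ := exists_sum_range_le_mul_harmonic_add ha
  obtain ⟨J, hJ⟩ := eventually_atTop.1 ha
  refine ⟨C + a ^ 2, ?_⟩
  filter_upwards [eventually_ge_atTop J] with n hn
  have head : ∑ j ∈ range n, bernoulliGap n (x j) ≤ n * (a * harmonic n + C) :=
    calc ∑ j ∈ range n, bernoulliGap n (x j) ≤ ∑ j ∈ range n, n * x j :=
          sum_le_sum fun j _ => bernoulliGap_le_mul n (hx0 j) (by linarith [hx1 j])
      _ ≤ n * (a * harmonic n + C) := by
          rw [← mul_sum]
          exact mul_le_mul_of_nonneg_left (hC n) n.cast_nonneg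
  have tail := tsum_bernoulliGap_nat_add_le hx0 hx1 hJ hn
  rw [← (summable_bernoulliGap hx0 hx1 hs n).sum_add_tsum_nat_add n]
  linarith

theorem exists_le_tsum_bernoulliGap (hb : ∀ᶠ j : ℕ in atTop, b / (j + 1) ≤ x j) :
    ∃ C, ∀ n : ℕ, n * (b * harmonic n - C) ≤ ∑' j, bernoulliGap n (x j) := by
  obtain ⟨C, hC⟩ := exists_sum_range_le_mul_harmonic_add (x := -x) (a := -b)
    (hb.mono fun j hj => by simp only [Pi.neg_apply, neg_div]; linarith)
  refine ⟨C + 1, fun n => ?_⟩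
  have hsum : b * harmonic n - C ≤ ∑ j ∈ range n, x j := by
    have := hC n
    simp only [Pi.neg_apply, sum_neg_distrib] at this
    linarith
  calc n * (b * harmonic n - (C + 1)) ≤ n * ∑ j ∈ range n, x j - n := by
        nlinarith [mul_le_mul_of_nonneg_left hsum n.cast_nonneg]
    _ = ∑ j ∈ range n, (n * x j - 1) := by simp [sum_sub_distrib, mul_sum]
    _ ≤ ∑ j ∈ range n, bernoulliGap n (x j) :=
        sum_le_sum fun j _ => mul_sub_one_le_bernoulliGap n (hx1 j)
    _ ≤ ∑' j, bernoulliGap n (x j) :=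
        (summable_bernoulliGap hx0 hx1 hs n).sum_le_tsum _ fun j _ =>
          bernoulliGap_nonneg n (by linarith [hx1 j])

end

theorem tendsto_tsum_bernoulliGap_div_mul_log {x : ℕ → ℝ} {c : ℝ} (hx0 : ∀ j, 0 ≤ x j)
    (hx1 : ∀ j, x j ≤ 1) (hx : Tendsto (fun j : ℕ => ((j : ℝ) + 1) * x j) atTop (𝓝 c)) :
    Tendsto (fun n : ℕ => 1 / (n * log n) * ∑' j, bernoulliGap n (x j)) atTop (𝓝 c) := by
  have hs := summable_sq_of_eventually_le_div_succ hx0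
    (eventually_le_div_succ_of_tendsto hx (lt_add_one c))
  have hpos : ∀ᶠ n : ℕ in atTop, 0 < (n : ℝ) ∧ 0 < log n := by
    filter_upwards [eventually_gt_atTop 1] with n hn
    have : (1 : ℝ) < n := by exact_mod_cast hn
    exact ⟨by linarith, log_pos this⟩
  rw [tendsto_order]
  constructor
  · intro b hb
    obtain ⟨b', hbb', hb'c⟩ := exists_between hb
    obtain ⟨C, hC⟩ := exists_le_tsum_bernoulliGap hx0 hx1 hs
      (eventually_div_succ_le_of_tendsto hx hb'c)
    filter_upwards [(tendsto_mul_harmonic_add_div_log b' (-C)).eventually (lt_mem_nhds hbb'),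
      hpos] with n hlt ⟨hn, hlog⟩
    calc b < (b' * harmonic n + -C) / log n := hlt
      _ = 1 / (n * log n) * (n * (b' * harmonic n - C)) := by
          field_simp [hn.ne', hlog.ne']
          ring
      _ ≤ _ := mul_le_mul_of_nonneg_left (hC n) (by positivity)
  · intro a ha
    obtain ⟨a', hca', ha'a⟩ := exists_between ha
    obtain ⟨C, hC⟩ := exists_tsum_bernoulliGap_le hx0 hx1 hs
      (eventually_le_div_succ_of_tendsto hx hca')
    filter_upwards [(tendsto_mul_harmonic_add_div_log a' C).eventually (gt_mem_nhds ha'a),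
      hpos, hC] with n hlt ⟨hn, hlog⟩ hCn
    calc _ ≤ 1 / (n * log n) * (n * (a' * harmonic n + C)) :=
          mul_le_mul_of_nonneg_left hCn (by positivity)
      _ = (a' * harmonic n + C) / log n := by
          field_simp [hn.ne', hlog.ne']
      _ < a := hlt

theorem ContinuousOn.exists_abs_sub_le_add_mul_one_sub {g : ℝ → ℝ}
    (hg : ContinuousOn g (Set.Icc 0 1)) {ε : ℝ} (hε : 0 < ε) :
    ∃ K, ∀ x ∈ Set.Icc (0 : ℝ) 1, |g x - g 1| ≤ ε + K * (1 - x) := by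
  have h1 : (1 : ℝ) ∈ Set.Icc 0 1 := ⟨zero_le_one, le_rfl⟩
  obtain ⟨M, hM⟩ := isCompact_Icc.exists_bound_of_continuousOn hg
  obtain ⟨δ, hδ, hδg⟩ := Metric.continuousWithinAt_iff.1 (hg 1 h1) ε hε
  have hM0 : 0 ≤ M := (norm_nonneg _).trans (hM 1 h1)
  refine ⟨2 * M / δ, fun x hx => ?_⟩
  have hK : 0 ≤ 2 * M / δ * (1 - x) := mul_nonneg (by positivity) (by linarith [hx.2])
  rcases lt_or_ge (1 - x) δ with hxδ | hxδ
  · have := hδg hx (by rw [Real.dist_eq, abs_lt]; constructor <;> linarith [hx.2])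
    rw [Real.dist_eq] at this
    linarith
  · have hgx := hM x hx
    have hg1 := hM 1 h1
    rw [Real.norm_eq_abs] at hgx hg1
    calc |g x - g 1| ≤ |g x| + |g 1| := abs_sub _ _
      _ ≤ 2 * M / δ * δ := by field_simp; linarith
      _ ≤ 2 * M / δ * (1 - x) := by gcongr
      _ ≤ ε + 2 * M / δ * (1 - x) := by linarith

theorem integral_pow_mul_add_mul_one_sub (j : ℕ) (α β : ℝ) :
    ∫ x in (0 : ℝ)..1, x ^ j * (α + β * (1 - x)) =
      α / (j + 1) + β / ((j + 1) * (j + 2)) := by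
  have : (fun x : ℝ => x ^ j * (α + β * (1 - x))) =
      fun x => (α + β) * x ^ j - β * x ^ (j + 1) := by
    ext x
    ring
  rw [this, intervalIntegral.integral_sub (Continuous.intervalIntegrable (by fun_prop) _ _)
    (Continuous.intervalIntegrable (by fun_prop) _ _),
    intervalIntegral.integral_const_mul, intervalIntegral.integral_const_mul, integral_pow,
    integral_pow]
  push_cast
  field_simp
  ring

theorem abs_succ_mul_integral_pow_mul_sub_le {f : ℝ → ℝ} (hf : ContinuousOn f (Set.Icc 0 1))
    {ε K : ℝ} (hK : ∀ x ∈ Set.Icc (0 : ℝ) 1, |f x - f 1| ≤ ε + K * (1 - x)) (j : ℕ) :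
    |((j : ℝ) + 1) * (∫ x in (0 : ℝ)..1, x ^ j * f x) - f 1| ≤ ε + K / (j + 2) := by
  have hj1 : (0 : ℝ) < j + 1 := by positivity
  have hf' : ContinuousOn f (Set.uIcc 0 1) := by rwa [Set.uIcc_of_le zero_le_one]
  have hint : IntervalIntegrable (fun x => x ^ j * f x) volume 0 1 :=
    ((continuousOn_pow j).mul hf').intervalIntegrable
  have hsub : ((j : ℝ) + 1) * (∫ x in (0 : ℝ)..1, x ^ j * f x) - f 1
      = (j + 1) * ∫ x in (0 : ℝ)..1, x ^ j * (f x - f 1) := by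
    simp_rw [mul_sub]
    rw [intervalIntegral.integral_sub hint (Continuous.intervalIntegrable (by fun_prop) _ _),
      intervalIntegral.integral_mul_const, integral_pow]
    field_simp
    ring
  rw [hsub, abs_mul, abs_of_pos hj1]
  calc (j + 1) * |∫ x in (0 : ℝ)..1, x ^ j * (f x - f 1)|
      ≤ (j + 1) * ∫ x in (0 : ℝ)..1, x ^ j * (ε + K * (1 - x)) := by
        gcongr
        refine (intervalIntegral.abs_integral_le_integral_abs zero_le_one).trans
          (intervalIntegral.integral_mono_on zero_le_one ?_
            (Continuous.intervalIntegrable (by fun_prop) _ _) fun x hx => ?_)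
        · exact ((continuousOn_pow j).mul (hf'.sub continuousOn_const)).abs.intervalIntegrable
        · rw [abs_mul, abs_of_nonneg (pow_nonneg hx.1 j)]
          exact mul_le_mul_of_nonneg_left (hK x hx) (pow_nonneg hx.1 j)
    _ = ε + K / (j + 2) := by
        rw [integral_pow_mul_add_mul_one_sub]
        field_simp

theorem tendsto_succ_mul_setIntegral_pow_mul {f : ℝ → ℝ} (hf : ContinuousOn f (Set.Icc 0 1)) :
    Tendsto (fun j : ℕ => ((j : ℝ) + 1) * ∫ x in Set.Icc (0 : ℝ) 1, x ^ j * f x) atTop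
      (𝓝 (f 1)) := by
  simp_rw [integral_Icc_eq_integral_Ioc, ← intervalIntegral.integral_of_le zero_le_one]
  rw [Metric.tendsto_atTop]
  intro ε hε
  obtain ⟨K, hK⟩ := hf.exists_abs_sub_le_add_mul_one_sub (half_pos hε)
  have hK0 : Tendsto (fun j : ℕ => K / ((j : ℝ) + 2)) atTop (𝓝 0) :=
    tendsto_const_nhds.div_atTop (tendsto_atTop_add_const_right _ _ tendsto_natCast_atTop_atTop)
  obtain ⟨N, hN⟩ := eventually_atTop.1 (hK0.eventually (gt_mem_nhds (half_pos hε)))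
  refine ⟨N, fun j hj => ?_⟩
  rw [Real.dist_eq]
  linarith [abs_succ_mul_integral_pow_mul_sub_le hf hK j, hN j hj]

theorem setIntegral_Icc_pow_mul_mem_Icc {f : ℝ → ℝ} (hf : ContinuousOn f (Set.Icc 0 1))
    (hf0 : ∀ x ∈ Set.Icc (0 : ℝ) 1, 0 ≤ f x) (hf1 : ∫ x in Set.Icc (0 : ℝ) 1, f x = 1)
    (j : ℕ) :
    ∫ x in Set.Icc (0 : ℝ) 1, x ^ j * f x ∈ Set.Icc 0 1 :=
  ⟨setIntegral_nonneg measurableSet_Icc fun x hx => mul_nonneg (pow_nonneg hx.1 j) (hf0 x hx),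
    (setIntegral_mono_on ((continuousOn_pow j).mul hf).integrableOn_Icc hf.integrableOn_Icc
      measurableSet_Icc fun x hx =>
        mul_le_of_le_one_left (hf0 x hx) (pow_le_one₀ hx.1 hx.2)).trans_eq hf1⟩

theorem sum_Icc_two_neg_one_pow_mul_choose_mul_tsum_pow {x : ℕ → ℝ}
    (hx : ∀ k, 2 ≤ k → Summable fun j => x j ^ k) (n : ℕ) :
    ∑ k ∈ Icc 2 n, (-1 : ℝ) ^ k * (n.choose k : ℝ) * ∑' j, x j ^ k
      = ∑' j, bernoulliGap n (x j) := by
  simp_rw [← tsum_mul_left]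
  rw [← Summable.tsum_finsetSum fun k hk => (hx k (mem_Icc.1 hk).1).mul_left _]
  exact tsum_congr fun j => sum_Icc_two_neg_one_pow_mul_choose_mul_pow n (x j)

theorem stmt_13_general (f : ℝ → ℝ) (c : ℝ)
    (hf_cont : ContinuousOn f (Set.Icc (0 : ℝ) 1))
    (hf_nonneg : ∀ x ∈ Set.Icc (0 : ℝ) 1, 0 ≤ f x)
    (hf_prob : ∫ x in Set.Icc (0 : ℝ) 1, f x = 1)
    (hf_lim : Tendsto f (nhdsWithin 1 (Set.Iio 1)) (𝓝 c))
    (m : ℕ → ℝ) (hm : ∀ j, m j = ∫ x in Set.Icc (0 : ℝ) 1, x ^ j * f x) :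
    (∀ k : ℕ, 2 ≤ k → Summable fun j : ℕ => m (j + 1) ^ k) ∧
    Tendsto (fun n : ℕ => (1 / ((n : ℝ) * Real.log n)) *
        ∑ k ∈ Icc 2 n, (-1 : ℝ) ^ k * (n.choose k : ℝ) * ∑' j : ℕ, m (j + 1) ^ k)
      atTop (𝓝 c) := by
  have hf1 : f 1 = c := by
    have h := (hf_cont 1 ⟨zero_le_one, le_rfl⟩).mono Set.Ico_subset_Icc_self
    rw [ContinuousWithinAt, nhdsWithin_Ico_eq_nhdsLT zero_lt_one] at h
    exact tendsto_nhds_unique h hf_lim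
  have hm01 (j : ℕ) : m j ∈ Set.Icc 0 1 :=
    hm j ▸ setIntegral_Icc_pow_mul_mem_Icc hf_cont hf_nonneg hf_prob j
  -- `m (j + 1)` is the `j`-th moment of `x * f x`
  have hlim : Tendsto (fun j : ℕ => ((j : ℝ) + 1) * m (j + 1)) atTop (𝓝 c) := by
    have := tendsto_succ_mul_setIntegral_pow_mul (f := fun x => x * f x)
      (continuousOn_id.mul hf_cont)
    rw [one_mul, hf1] at this
    refine this.congr fun j => ?_
    simp_rw [hm, pow_succ, mul_assoc]
  have hsq := summable_sq_of_eventually_le_div_succ (fun j => (hm01 (j + 1)).1)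
    (eventually_le_div_succ_of_tendsto hlim (lt_add_one c))
  have hpow (k : ℕ) (hk : 2 ≤ k) : Summable fun j => m (j + 1) ^ k :=
    hsq.of_nonneg_of_le (fun j => pow_nonneg (hm01 _).1 k)
      fun j => pow_le_pow_of_le_one (hm01 _).1 (hm01 _).2 hk
  refine ⟨hpow, ?_⟩
  simp_rw [sum_Icc_two_neg_one_pow_mul_choose_mul_tsum_pow hpow]
  exact tendsto_tsum_bernoulliGap_div_mul_log (fun j => (hm01 _).1) (fun j => (hm01 _).2) hlim

/-- Let `μ` be a probability measure on `[0,1]` with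
continuous density `f` with respect to Lebesgue measure, and suppose
`f(x) → c > 0` as `x → 1⁻`.  Then the moment zeta function
`ζ_μ(k) = ∑_{j≥1} (m j)^k` is finite for every `k ≥ 2`, and
`(1/(n log n)) ∑_{k=2}^n (-1)^k C(n,k) ζ_μ(k) → c` as `n → ∞`. -/
theorem stmt_13 (f : ℝ → ℝ) (c : ℝ) (hc : 0 < c)
    (hf_cont : ContinuousOn f (Set.Icc (0 : ℝ) 1))
    (hf_nonneg : ∀ x ∈ Set.Icc (0 : ℝ) 1, 0 ≤ f x)
    (hf_prob : ∫ x in Set.Icc (0 : ℝ) 1, f x = 1)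
    (hf_lim : Tendsto f (nhdsWithin 1 (Set.Iio 1)) (𝓝 c))
    (m : ℕ → ℝ) (hm : ∀ j, m j = ∫ x in Set.Icc (0 : ℝ) 1, x ^ j * f x) :
    (∀ k : ℕ, 2 ≤ k → Summable fun j : ℕ => m (j + 1) ^ k) ∧
    Tendsto (fun n : ℕ => (1 / ((n : ℝ) * Real.log n)) *
        ∑ k ∈ Icc 2 n, (-1 : ℝ) ^ k * (n.choose k : ℝ) * ∑' j : ℕ, m (j + 1) ^ k)
      atTop (𝓝 c) :=
  stmt_13_general f c hf_cont hf_nonneg hf_prob hf_lim m hm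
end

section
/- Let ζ denote the Riemann zeta function, Γ the Gamma function, and let s > 1 be a real number. Then lim_{n→∞} n^{−1/s} ∑_{k=1}^n (−1)^k C(n,k) ζ(s k) = −Γ(1 − 1/s); equivalently, −∑_{k=1}^n (−1)^k C(n,k) ζ(s k) is asymptotic to Γ(1 − 1/s) n^{1/s} as n → ∞. -/
open Finset Filter
open scoped Topology

/-!
Writing `ζ(sk) = ∑_j (j+1)^(-sk)` and summing the binomial expansion under the series, the
sum equals `-∑_j (1 - (1 - (j+1)^(-s))^n)`. The summand is monotone in `j` and bounded by `1`,
so the series differs from `∫_0^∞ (1 - (1 - x^(-s))^n) dx` by at most `1`. The substitution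
`x = n^(1/s) y` turns `n^(-1/s)` times this integral into `∫_0^∞ (1 - (1 - y^(-s)/n)^n) dy`, which
tends to `∫_0^∞ (1 - exp(-y^(-s))) dy` by dominated convergence; an integration by parts and the
substitution `y = 1/x` evaluate the latter as `Γ(1 - 1/s)`.
-/

lemma sum_Icc_choose_mul_pow (n : ℕ) (x : ℝ) :
    ∑ k ∈ Icc 1 n, (-1 : ℝ) ^ k * (n.choose k : ℝ) * x ^ k = (1 - x) ^ n - 1 := by
  have h := add_pow (-x) 1 n
  rw [range_eq_Ico, sum_eq_sum_Ico_succ_bot n.succ_pos, Nat.succ_eq_add_one, zero_add,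
    Ico_add_one_right_eq_Icc, neg_add_eq_sub] at h
  rw [h]
  simp only [one_pow, mul_one, pow_zero, Nat.choose_zero_right, Nat.cast_one, add_sub_cancel_left]
  exact sum_congr rfl fun k _ => by rw [neg_pow x]; ring

lemma sum_Icc_choose_mul_tsum_pow {a : ℕ → ℝ} (ha : Summable a) (h0 : ∀ j, 0 ≤ a j)
    (h1 : ∀ j, a j ≤ 1) (n : ℕ) :
    ∑ k ∈ Icc 1 n, (-1 : ℝ) ^ k * (n.choose k : ℝ) * ∑' j, a j ^ k =
      -∑' j, (1 - (1 - a j) ^ n) := by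
  have hsummable : ∀ k ∈ Icc 1 n,
      Summable fun j => (-1 : ℝ) ^ k * (n.choose k : ℝ) * a j ^ k := fun k hk =>
    (ha.of_nonneg_of_le (fun j => pow_nonneg (h0 j) k)
      (fun j => pow_le_of_le_one (h0 j) (h1 j) (by grind))).mul_left _
  simp_rw [← tsum_mul_left]
  rw [← Summable.tsum_finsetSum hsummable, ← tsum_neg]
  refine tsum_congr fun j => ?_
  rw [sum_Icc_choose_mul_pow]
  ring

section Analysis

open Real Set MeasureTheory

/-- `1 - (1 - t) ^ n` with `1 - t` truncated at `0`, so that `x ↦ truncPow n (x ^ (-s))` stays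
in `[0, 1]` on all of `(0, ∞)`, also where `x ^ (-s) > 1`. -/
noncomputable def truncPow (n : ℕ) (t : ℝ) : ℝ := 1 - max 0 (1 - t) ^ n

lemma truncPow_of_le_one (n : ℕ) {t : ℝ} (ht : t ≤ 1) : truncPow n t = 1 - (1 - t) ^ n := by
  rw [truncPow, max_eq_right (by linarith)]

lemma truncPow_le_one (n : ℕ) (t : ℝ) : truncPow n t ≤ 1 := by
  have := pow_nonneg (le_max_left 0 (1 - t)) n
  rw [truncPow]
  linarith

lemma truncPow_nonneg (n : ℕ) {t : ℝ} (ht : 0 ≤ t) : 0 ≤ truncPow n t := by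
  have := pow_le_one₀ (n := n) (le_max_left 0 (1 - t)) (max_le zero_le_one (by linarith))
  rw [truncPow]
  linarith

lemma truncPow_le_mul (n : ℕ) (t : ℝ) : truncPow n t ≤ n * t := by
  have bernoulli := one_add_mul_le_pow (a := max 0 (1 - t) - 1)
    (by linarith [le_max_left 0 (1 - t)]) n
  have := mul_le_mul_of_nonneg_left (by linarith [le_max_right 0 (1 - t)] :
    -t ≤ max 0 (1 - t) - 1) (Nat.cast_nonneg (α := ℝ) n)
  rw [add_sub_cancel] at bernoulli
  rw [truncPow]
  linarith

lemma truncPow_monotone (n : ℕ) : Monotone (truncPow n) := fun a b hab => by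
  have := pow_le_pow_left₀ (le_max_left 0 (1 - b))
    (max_le_max le_rfl (by linarith : 1 - b ≤ 1 - a)) n
  rw [truncPow, truncPow]
  linarith

lemma continuous_truncPow (n : ℕ) : Continuous (truncPow n) := by
  unfold truncPow
  fun_prop

lemma tendsto_truncPow_div (a : ℝ) :
    Tendsto (fun n : ℕ => truncPow n (a / n)) atTop (𝓝 (1 - exp (-a))) := by
  refine (tendsto_const_nhds.sub (tendsto_one_add_div_pow_exp (-a))).congr' ?_
  filter_upwards [(tendsto_const_div_atTop_nhds_zero_nat a).eventually
    (eventually_le_nhds one_pos)] with n hn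
  rw [truncPow_of_le_one n hn, neg_div, ← sub_eq_add_neg]

lemma AntitoneOn.abs_tsum_add_one_sub_integral_le {f : ℝ → ℝ} {M : ℝ}
    (anti : AntitoneOn f (Ioi (0 : ℝ))) (integrable : IntegrableOn f (Ioi 0))
    (nonneg : ∀ x ∈ Ioi (0 : ℝ), 0 ≤ f x) (bdd : ∀ x ∈ Ioi (0 : ℝ), f x ≤ M) :
    |∑' n : ℕ, f (n + 1) - ∫ x in Ioi 0, f x| ≤ M := by
  have anti₁ : AntitoneOn f (Ici ((1 : ℕ) : ℝ)) :=
    anti.mono fun x hx => lt_of_lt_of_le one_pos (by simpa using hx)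
  have integrable₁ : IntegrableOn f (Ioi ((1 : ℕ) : ℝ)) :=
    integrable.mono_set (Ioi_subset_Ioi (by norm_num))
  have nonneg₁ : ∀ x ∈ Ioi ((1 : ℕ) : ℝ), 0 ≤ f x :=
    fun x hx => nonneg x (lt_trans one_pos (by simpa using hx))
  have summable := anti₁.summable_of_integrableOn_Ioi integrable₁ nonneg₁
  have lower := anti₁.tsum_comp_add_le_integral 1 integrable₁ nonneg₁
  have upper := anti₁.integral_le_tsum_comp_add 1 summable nonneg₁
  have split : ∫ x in Ioi 0, f x = (∫ x in Ioc 0 1, f x) + ∫ x in Ioi 1, f x := by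
    rw [← setIntegral_union Ioc_disjoint_Ioi_same measurableSet_Ioi
      (integrable.mono_set Ioc_subset_Ioi_self) (integrable.mono_set (Ioi_subset_Ioi zero_le_one)),
      Ioc_union_Ioi_eq_Ioi zero_le_one]
  have head : ∑' n : ℕ, f (n + 1) = f 1 + ∑' n : ℕ, f (n + 1 + 1) := by
    have := ((summable_nat_add_iff 1).2 summable).tsum_eq_zero_add
    push_cast at this ⊢
    simpa [add_assoc, one_add_one_eq_two] using this
  have ioc_nonneg : 0 ≤ ∫ x in Ioc 0 1, f x :=
    setIntegral_nonneg measurableSet_Ioc fun x hx => nonneg x hx.1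
  have ioc_le : ∫ x in Ioc 0 1, f x ≤ M := by
    simpa using setIntegral_mono_on (integrable.mono_set Ioc_subset_Ioi_self)
      (integrableOn_const (by simp) (by simp)) measurableSet_Ioc
      fun x (hx : x ∈ Ioc (0 : ℝ) 1) => bdd x hx.1
  push_cast at lower upper
  rw [abs_le]
  constructor <;> linarith [nonneg 1 (mem_Ioi.2 one_pos), bdd 1 (mem_Ioi.2 one_pos)]

variable {s : ℝ}

lemma integrableOn_min_one_rpow_neg (hs : 1 < s) :
    IntegrableOn (fun y : ℝ => min 1 (y ^ (-s))) (Ioi 0) := by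
  have hmeas : Measurable fun y : ℝ => min 1 (y ^ (-s)) := by fun_prop
  rw [← Ioc_union_Ioi_eq_Ioi zero_le_one]
  refine IntegrableOn.union ?_ ?_
  · refine (integrableOn_const (by simp) (by simp) : IntegrableOn (fun _ => (1 : ℝ)) _).mono'
      hmeas.aestronglyMeasurable (ae_restrict_of_forall_mem measurableSet_Ioc fun y hy => ?_)
    rw [norm_of_nonneg (le_min zero_le_one (rpow_nonneg hy.1.le _))]
    exact min_le_left _ _
  · refine (integrableOn_Ioi_rpow_of_lt (a := -s) (by linarith) one_pos).mono'
      hmeas.aestronglyMeasurable (ae_restrict_of_forall_mem measurableSet_Ioi fun y hy => ?_)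
    rw [norm_of_nonneg (le_min zero_le_one (rpow_nonneg (zero_le_one.trans hy.le) _))]
    exact min_le_right _ _

lemma integrableOn_of_norm_le_mul_min_one_rpow_neg (hs : 1 < s) {f : ℝ → ℝ}
    (hf : Measurable f) (C : ℝ) (hbound : ∀ y ∈ Ioi (0 : ℝ), ‖f y‖ ≤ C * min 1 (y ^ (-s))) :
    IntegrableOn f (Ioi 0) :=
  ((integrableOn_min_one_rpow_neg hs).const_mul C).mono' hf.aestronglyMeasurable
    (ae_restrict_of_forall_mem measurableSet_Ioi hbound)

lemma integral_rpow_neg_mul_exp_neg_rpow_neg (hs : 1 < s) :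
    ∫ y in Ioi (0 : ℝ), y ^ (-s) * exp (-y ^ (-s)) = 1 / s * Gamma (1 - 1 / s) := by
  rw [← integral_comp_rpow_Ioi _ (neg_ne_zero.2 one_ne_zero)]
  have hsubst : ∀ x ∈ Ioi (0 : ℝ), (|(-1 : ℝ)| * x ^ ((-1 : ℝ) - 1)) •
      ((x ^ (-1 : ℝ)) ^ (-s) * exp (-(x ^ (-1 : ℝ)) ^ (-s))) = x ^ (s - 2) * exp (-x ^ s) := by
    intro x hx
    rw [← rpow_mul hx.le, smul_eq_mul, abs_neg, abs_one, one_mul, ← mul_assoc, ← rpow_add hx,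
      neg_one_mul, neg_neg]
    ring_nf
  rw [setIntegral_congr_fun measurableSet_Ioi hsubst,
    integral_rpow_mul_exp_neg_rpow (by linarith) (by linarith)]
  congr 2
  field_simp
  ring

lemma one_sub_exp_neg_rpow_neg_nonneg (s : ℝ) {y : ℝ} (hy : 0 < y) :
    0 ≤ 1 - exp (-y ^ (-s)) :=
  sub_nonneg.2 (exp_le_one_iff.2 (neg_nonpos.2 (rpow_nonneg hy.le _)))

lemma tendsto_one_sub_exp_neg_rpow_neg_mul_self_nhdsGT_zero (s : ℝ) :
    Tendsto (fun y => (1 - exp (-y ^ (-s))) * y) (𝓝[>] 0) (𝓝 0) := by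
  refine squeeze_zero' ?_ ?_ (tendsto_nhdsWithin_of_tendsto_nhds tendsto_id)
  · filter_upwards [self_mem_nhdsWithin] with y hy
    exact mul_nonneg (one_sub_exp_neg_rpow_neg_nonneg s hy) hy.le
  · filter_upwards [self_mem_nhdsWithin] with y hy
    exact mul_le_of_le_one_left hy.le (sub_le_self _ (exp_pos _).le)

lemma tendsto_one_sub_exp_neg_rpow_neg_mul_self_atTop (hs : 1 < s) :
    Tendsto (fun y => (1 - exp (-y ^ (-s))) * y) atTop (𝓝 0) := by
  refine squeeze_zero' ?_ ?_ (tendsto_rpow_neg_atTop (by linarith : 0 < s - 1))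
  · filter_upwards [eventually_gt_atTop 0] with y hy
    exact mul_nonneg (one_sub_exp_neg_rpow_neg_nonneg s hy) hy.le
  · filter_upwards [eventually_gt_atTop 0] with y hy
    calc (1 - exp (-y ^ (-s))) * y ≤ y ^ (-s) * y := by
          gcongr; linarith [one_sub_le_exp_neg (y ^ (-s))]
      _ = y ^ (-(s - 1)) := by rw [neg_sub, sub_eq_neg_add, rpow_add_one hy.ne']

lemma integrableOn_one_sub_exp_neg_rpow_neg (hs : 1 < s) :
    IntegrableOn (fun y : ℝ => 1 - exp (-y ^ (-s))) (Ioi 0) :=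
  integrableOn_of_norm_le_mul_min_one_rpow_neg hs (by fun_prop) 1 fun y hy => by
    rw [one_mul, norm_of_nonneg (one_sub_exp_neg_rpow_neg_nonneg s hy)]
    exact le_min (sub_le_self _ (exp_pos _).le) (by linarith [one_sub_le_exp_neg (y ^ (-s))])

lemma integrableOn_rpow_neg_mul_exp_neg_rpow_neg (hs : 1 < s) :
    IntegrableOn (fun y : ℝ => y ^ (-s) * exp (-y ^ (-s))) (Ioi 0) :=
  integrableOn_of_norm_le_mul_min_one_rpow_neg hs (by fun_prop) 1 fun y hy => by
    have ht := rpow_nonneg hy.le (-s)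
    rw [one_mul, norm_of_nonneg (mul_nonneg ht (exp_pos _).le)]
    exact le_min ((mul_exp_neg_le_exp_neg_one _).trans (exp_le_one_iff.2 (by norm_num)))
      (mul_le_of_le_one_right ht (exp_le_one_iff.2 (neg_nonpos.2 ht)))

lemma integral_one_sub_exp_neg_rpow_neg (hs : 1 < s) :
    ∫ y in Ioi (0 : ℝ), (1 - exp (-y ^ (-s))) = Gamma (1 - 1 / s) := by
  have hu : ∀ y ∈ Ioi (0 : ℝ), HasDerivAt (fun y => 1 - exp (-y ^ (-s)))
      (-(s * y ^ (-s - 1) * exp (-y ^ (-s)))) y := fun y hy => by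
    refine (((hasDerivAt_rpow_const (Or.inl hy.ne')).neg.exp).const_sub 1).congr_deriv ?_
    simp only [Pi.neg_apply]
    ring
  have hu'v : ∀ y ∈ Ioi (0 : ℝ),
      -(s * y ^ (-s - 1) * exp (-y ^ (-s))) * y = -(s * (y ^ (-s) * exp (-y ^ (-s)))) :=
    fun y hy => by
      have hy₀ : y ≠ 0 := hy.ne'
      rw [rpow_sub_one hy₀]
      field_simp
  have hint_u'v : IntegrableOn ((fun y => -(s * y ^ (-s - 1) * exp (-y ^ (-s)))) * id) (Ioi 0) :=
    IntegrableOn.congr_fun ((integrableOn_rpow_neg_mul_exp_neg_rpow_neg hs).const_mul s).neg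
      (fun y hy => by simp only [Pi.mul_apply, Pi.neg_apply, id, hu'v y hy]) measurableSet_Ioi
  have ibp := integral_Ioi_mul_deriv_eq_deriv_mul hu (fun y _ => hasDerivAt_id y)
    (by simpa only [Pi.mul_def, mul_one] using integrableOn_one_sub_exp_neg_rpow_neg hs)
    hint_u'v (tendsto_one_sub_exp_neg_rpow_neg_mul_self_nhdsGT_zero s)
    (tendsto_one_sub_exp_neg_rpow_neg_mul_self_atTop hs)
  simp only [id, mul_one] at ibp
  rw [ibp, setIntegral_congr_fun measurableSet_Ioi hu'v, integral_neg, integral_const_mul,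
    integral_rpow_neg_mul_exp_neg_rpow_neg hs]
  field_simp
  ring

lemma integral_Ioi_comp_rpow_neg_div (g : ℝ → ℝ) (hs : s ≠ 0) {b : ℝ} (hb : 0 < b) :
    ∫ y in Ioi (0 : ℝ), g (y ^ (-s) / b) = b ^ (-(1 / s)) * ∫ x in Ioi (0 : ℝ), g (x ^ (-s)) := by
  have hc : 0 < b ^ (1 / s) := rpow_pos_of_pos hb _
  have hscale := integral_comp_mul_left_Ioi (fun x => g (x ^ (-s))) 0 hc
  rw [mul_zero, smul_eq_mul, ← rpow_neg_one, ← rpow_mul hb.le, mul_neg_one] at hscale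
  rw [← hscale]
  refine setIntegral_congr_fun measurableSet_Ioi fun y hy => ?_
  rw [mul_rpow hc.le hy.le, ← rpow_mul hb.le, one_div_mul_eq_div, neg_div, div_self hs,
    rpow_neg_one, inv_mul_eq_div]

lemma tendsto_integral_truncPow_rpow_neg_div (hs : 1 < s) :
    Tendsto (fun n : ℕ => ∫ y in Ioi (0 : ℝ), truncPow n (y ^ (-s) / n)) atTop
      (𝓝 (∫ y in Ioi (0 : ℝ), (1 - exp (-y ^ (-s))))) := by
  refine tendsto_integral_filter_of_dominated_convergence (fun y => min 1 (y ^ (-s)))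
    (Eventually.of_forall fun n => ?_) ?_ (integrableOn_min_one_rpow_neg hs)
    (ae_restrict_of_forall_mem measurableSet_Ioi fun y _ => tendsto_truncPow_div _)
  · exact ((continuous_truncPow n).measurable.comp (by fun_prop)).aestronglyMeasurable
  · filter_upwards [eventually_gt_atTop 0] with n hn
    refine ae_restrict_of_forall_mem measurableSet_Ioi fun y hy => ?_
    have ht : 0 ≤ y ^ (-s) / n := by have := rpow_nonneg hy.le (-s); positivity
    rw [norm_of_nonneg (truncPow_nonneg n ht)]
    refine le_min (truncPow_le_one n _) ((truncPow_le_mul n _).trans_eq ?_)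
    field_simp

lemma abs_tsum_sub_integral_truncPow_le_one (hs : 1 < s) (n : ℕ) :
    |∑' j : ℕ, truncPow n (((j : ℝ) + 1) ^ (-s)) - ∫ x in Ioi (0 : ℝ), truncPow n (x ^ (-s))|
      ≤ 1 := by
  have nonneg : ∀ x ∈ Ioi (0 : ℝ), 0 ≤ truncPow n (x ^ (-s)) :=
    fun x hx => truncPow_nonneg n (rpow_nonneg hx.le _)
  refine AntitoneOn.abs_tsum_add_one_sub_integral_le
    (fun x hx y hy hxy => truncPow_monotone n (rpow_le_rpow_of_nonpos hx hxy (by linarith)))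
    (integrableOn_of_norm_le_mul_min_one_rpow_neg hs
      ((continuous_truncPow n).measurable.comp (by fun_prop)) (n + 1) fun x hx => ?_)
    nonneg fun x _ => truncPow_le_one n _
  rw [norm_of_nonneg (nonneg x hx)]
  rcases le_total (x ^ (-s)) 1 with hle | hge
  · rw [min_eq_right hle]
    nlinarith [truncPow_le_mul n (x ^ (-s)), rpow_nonneg hx.le (-s)]
  · rw [min_eq_left hge]
    linarith [truncPow_le_one n (x ^ (-s)), (Nat.cast_nonneg n : (0 : ℝ) ≤ n)]

lemma tendsto_rpow_neg_mul_tsum_truncPow (hs : 1 < s) :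
    Tendsto (fun n : ℕ => (n : ℝ) ^ (-(1 / s)) * ∑' j : ℕ, truncPow n (((j : ℝ) + 1) ^ (-s)))
      atTop (𝓝 (Gamma (1 - 1 / s))) := by
  have hscaled : Tendsto (fun n : ℕ => (n : ℝ) ^ (-(1 / s)) *
      ∫ x in Ioi (0 : ℝ), truncPow n (x ^ (-s))) atTop (𝓝 (Gamma (1 - 1 / s))) := by
    rw [← integral_one_sub_exp_neg_rpow_neg hs]
    refine (tendsto_integral_truncPow_rpow_neg_div hs).congr' ?_
    filter_upwards [eventually_gt_atTop 0] with n hn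
    exact integral_Ioi_comp_rpow_neg_div _ (by positivity) (by exact_mod_cast hn)
  have hdecay : Tendsto (fun n : ℕ => (n : ℝ) ^ (-(1 / s))) atTop (𝓝 0) :=
    (tendsto_rpow_neg_atTop (by positivity)).comp tendsto_natCast_atTop_atTop
  refine hscaled.congr_dist (squeeze_zero (fun _ => dist_nonneg) (fun n => ?_) hdecay)
  rw [dist_eq_norm, ← mul_sub, norm_mul, norm_of_nonneg (by positivity), norm_eq_abs,
    abs_sub_comm]
  exact mul_le_of_le_one_right (by positivity) (abs_tsum_sub_integral_truncPow_le_one hs n)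

end Analysis

/-- With `ζ` the Riemann zeta function
(`ζ(x) = ∑_{j≥1} j^{-x}` for real `x > 1`), `Γ` the Gamma function and `s > 1`
a real number, `n^(-1/s) ∑_{k=1}^n (-1)^k C(n,k) ζ(s k) → -Γ(1 - 1/s)` as
`n → ∞`. -/
theorem stmt_16 (s : ℝ) (hs : 1 < s) :
    Tendsto (fun n : ℕ => (n : ℝ) ^ (-(1 / s)) *
        ∑ k ∈ Icc 1 n, (-1 : ℝ) ^ k * (n.choose k : ℝ)
          * ∑' j : ℕ, ((j : ℝ) + 1) ^ (-(s * k)))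
      atTop (𝓝 (-Real.Gamma (1 - 1 / s))) := by
  have hnonneg : ∀ j : ℕ, (0 : ℝ) ≤ ((j : ℝ) + 1) ^ (-s) := fun j => by positivity
  have hle_one : ∀ j : ℕ, ((j : ℝ) + 1) ^ (-s) ≤ 1 := fun j =>
    Real.rpow_le_one_of_one_le_of_nonpos (by simp) (by linarith)
  have hpow : ∀ j k : ℕ, ((j : ℝ) + 1) ^ (-(s * k)) = (((j : ℝ) + 1) ^ (-s)) ^ k := fun j k => by
    rw [← Real.rpow_natCast, ← Real.rpow_mul (by positivity), neg_mul]
  refine (tendsto_rpow_neg_mul_tsum_truncPow hs).neg.congr fun n => ?_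
  have hsummable : Summable fun j : ℕ => ((j : ℝ) + 1) ^ (-s) := by
    exact_mod_cast (summable_nat_add_iff 1).2 (Real.summable_nat_rpow.2 (by linarith))
  simp_rw [hpow, sum_Icc_choose_mul_tsum_pow hsummable hnonneg hle_one, mul_neg,
    truncPow_of_le_one n (hle_one _)]
end

section
/- For n ≥ 1 define D_n = lim_{N→∞} [∑_{j=1}^N (1 − 1/j)^n − ∫_1^N (1 − 1/x)^n dx]. Then this limit exists for every n, and n (D_n − 1/2) → 0 as n → ∞; that is, D_n = 1/2 + o(1/n). -/
/-!
Third-order Euler–Maclaurin summation. On each `[j, j + 1]`, integrating by parts three times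
against the kernel `B₃(t - j)/6` (with `B₃` the third Bernoulli polynomial) gives
`∫_j^{j+1} f = (f j + f (j+1))/2 - (f' (j+1) - f' j)/12 - R_j`
with `|R_j| ≤ (1/48) ∫_j^{j+1} |f'''|`.
For `f x = (1 - 1/x)^n` we have `f 1 = f' 1 = 0`, `f N → 1` and `f' N → 0`, so
`|D_n - 1/2| ≤ (1/48) ∫_1^∞ |f'''|`. Substituting `w = 1 - 1/x` bounds that integral by a sum
of Beta integrals `∫_0^1 w^a (1-w)^b`, totalling `72/((n+1)(n+2))`; hence `D_n = 1/2 + O(1/n²)`.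
The limit exists because `f` increases to `1`, which makes the sequence increasing and bounded.
-/

open MeasureTheory Filter Finset
open scoped Topology Nat

/-- `B₃(s)/6`; its successive derivatives are `B₂(s)/2`, `B₁(s) = s - 1/2` and `1`. -/
noncomputable def emKernel (s : ℝ) : ℝ := (2 * s ^ 3 - 3 * s ^ 2 + s) / 12

lemma abs_emKernel_le {s : ℝ} (h₀ : 0 ≤ s) (h₁ : s ≤ 1) : |emKernel s| ≤ 1 / 48 := by
  rw [abs_le, emKernel]
  constructor <;> nlinarith [sq_nonneg (2 * s - 1), mul_nonneg h₀ (sub_nonneg.2 h₁),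
    mul_nonneg (mul_nonneg h₀ h₀) (sub_nonneg.2 h₁)]

theorem integral_eq_trapezoid_sub_emKernel {f f' f'' f''' : ℝ → ℝ} {a : ℝ}
    (hf : ∀ t ∈ Set.uIcc a (a + 1), HasDerivAt f (f' t) t)
    (hf' : ∀ t ∈ Set.uIcc a (a + 1), HasDerivAt f' (f'' t) t)
    (hf'' : ∀ t ∈ Set.uIcc a (a + 1), HasDerivAt f'' (f''' t) t)
    (hf''' : IntervalIntegrable f''' volume a (a + 1)) :
    ∫ t in a..a + 1, f t = (f a + f (a + 1)) / 2 - (f' (a + 1) - f' a) / 12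
      - ∫ t in a..a + 1, emKernel (t - a) * f''' t := by
  have hs (t : ℝ) : HasDerivAt (fun t => t - a) 1 t := (hasDerivAt_id t).sub_const a
  have hK (t : ℝ) : HasDerivAt (fun t => emKernel (t - a))
      ((6 * (t - a) ^ 2 - 6 * (t - a) + 1) / 12) t := by
    refine ((((hs t).pow 3).const_mul 2 |>.sub (((hs t).pow 2).const_mul 3) |>.add
      (hs t)).div_const 12).congr_deriv ?_
    push_cast; ring
  have hK' (t : ℝ) : HasDerivAt (fun t => (6 * (t - a) ^ 2 - 6 * (t - a) + 1) / 12)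
      (t - a - 1 / 2) t := by
    refine (((((hs t).pow 2).const_mul 6).sub ((hs t).const_mul 6)).add_const 1
      |>.div_const 12).congr_deriv ?_
    push_cast; ring
  have hH : ∀ t ∈ Set.uIcc a (a + 1), HasDerivAt
      (fun t => emKernel (t - a) * f'' t - (6 * (t - a) ^ 2 - 6 * (t - a) + 1) / 12 * f' t
        + (t - a - 1 / 2) * f t)
      (emKernel (t - a) * f''' t + f t) t := fun t ht =>
    ((((hK t).mul (hf'' t ht)).sub ((hK' t).mul (hf' t ht))).add
      (((hs t).sub_const (1 / 2)).mul (hf t ht))).congr_deriv (by ring)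
  have hfc : IntervalIntegrable f volume a (a + 1) :=
    (HasDerivAt.continuousOn hf).intervalIntegrable
  have hkf : IntervalIntegrable (fun t => emKernel (t - a) * f''' t) volume a (a + 1) :=
    hf'''.continuousOn_mul (by unfold emKernel; fun_prop)
  have hftc := intervalIntegral.integral_eq_sub_of_hasDerivAt hH (hkf.add hfc)
  rw [intervalIntegral.integral_add hkf hfc] at hftc
  have hK0 : emKernel 0 = 0 := by norm_num [emKernel]
  have hK1 : emKernel 1 = 0 := by norm_num [emKernel]
  simp only [sub_self, add_sub_cancel_left, hK0, hK1] at hftc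
  linarith

section EulerMaclaurin

variable {f f' f'' f''' : ℝ → ℝ} {a : ℕ}

lemma uIcc_natCast_add_one_subset_Ici {j : ℕ} (hj : a ≤ j) :
    Set.uIcc (j : ℝ) (j + 1) ⊆ Set.Ici (a : ℝ) := by
  rw [Set.uIcc_of_le (by linarith)]
  exact Set.Icc_subset_Ici_iff (by linarith) |>.2 (by exact_mod_cast hj)

theorem sum_Icc_sub_integral_eq_emKernel
    (hf : ∀ t ∈ Set.Ici (a : ℝ), HasDerivAt f (f' t) t)
    (hf' : ∀ t ∈ Set.Ici (a : ℝ), HasDerivAt f' (f'' t) t)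
    (hf'' : ∀ t ∈ Set.Ici (a : ℝ), HasDerivAt f'' (f''' t) t)
    (hf''' : ContinuousOn f''' (Set.Ici (a : ℝ))) {N : ℕ} (hN : a ≤ N) :
    ∑ j ∈ Icc a N, f j - ∫ t in (a : ℝ)..N, f t = (f a + f N) / 2 + (f' N - f' a) / 12
      + ∑ j ∈ Ico a N, ∫ t in (j : ℝ)..j + 1, emKernel (t - j) * f''' t := by
  induction N, hN using Nat.le_induction with
  | base => simp
  | succ N hN ih =>
    have hsub := uIcc_natCast_add_one_subset_Ici hN
    have hunit := integral_eq_trapezoid_sub_emKernel (fun t ht => hf t (hsub ht))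
      (fun t ht => hf' t (hsub ht)) (fun t ht => hf'' t (hsub ht))
      ((hf'''.mono hsub).intervalIntegrable)
    have hfc : ContinuousOn f (Set.Ici (a : ℝ)) := HasDerivAt.continuousOn hf
    have haN : Set.uIcc (a : ℝ) N ⊆ Set.Ici (a : ℝ) := by
      rw [Set.uIcc_of_le (by exact_mod_cast hN)]; exact Set.Icc_subset_Ici_self
    rw [sum_Icc_succ_top (by omega), sum_Ico_succ_top hN, Nat.cast_succ,
      ← intervalIntegral.integral_add_adjacent_intervals ((hfc.mono haN).intervalIntegrable)
        ((hfc.mono hsub).intervalIntegrable)]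
    linarith

theorem abs_sum_emKernel_remainder_le (hf''' : ContinuousOn f''' (Set.Ici (a : ℝ))) {N : ℕ}
    (hN : a ≤ N) :
    |∑ j ∈ Ico a N, ∫ t in (j : ℝ)..j + 1, emKernel (t - j) * f''' t|
      ≤ (∫ t in (a : ℝ)..N, |f''' t|) / 48 := by
  have hint (j : ℕ) (hj : a ≤ j) :
      IntervalIntegrable (fun t => |f''' t|) volume (j : ℝ) (j + 1) :=
    ((hf'''.mono (uIcc_natCast_add_one_subset_Ici hj)).abs).intervalIntegrable
  calc _ ≤ ∑ j ∈ Ico a N, (∫ t in (j : ℝ)..j + 1, |f''' t|) / 48 := by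
        refine (abs_sum_le_sum_abs _ _).trans (sum_le_sum fun j hj => ?_)
        rw [← intervalIntegral.integral_div, ← Real.norm_eq_abs]
        refine intervalIntegral.norm_integral_le_of_norm_le (by linarith)
          (ae_of_all _ fun t ht => ?_) ((hint j (mem_Ico.1 hj).1).div_const _)
        rw [norm_mul, Real.norm_eq_abs, Real.norm_eq_abs, div_eq_inv_mul _ (48 : ℝ)]
        gcongr
        exact (abs_emKernel_le (by linarith [ht.1]) (by linarith [ht.2])).trans (by norm_num)
    _ = _ := by
        rw [← sum_div]
        congr 1
        simpa using intervalIntegral.sum_integral_adjacent_intervals_Ico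
          (a := fun j : ℕ => (j : ℝ)) hN fun j hj => by simpa using hint j hj.1

theorem abs_sub_le_of_tendsto_sum_sub_integral
    (hf : ∀ t ∈ Set.Ici (a : ℝ), HasDerivAt f (f' t) t)
    (hf' : ∀ t ∈ Set.Ici (a : ℝ), HasDerivAt f' (f'' t) t)
    (hf'' : ∀ t ∈ Set.Ici (a : ℝ), HasDerivAt f'' (f''' t) t)
    (hf''' : ContinuousOn f''' (Set.Ici (a : ℝ))) {D L B : ℝ}
    (hD : Tendsto (fun N : ℕ => ∑ j ∈ Icc a N, f j - ∫ t in (a : ℝ)..N, f t)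
      atTop (𝓝 D))
    (hL : Tendsto (fun N : ℕ => f N) atTop (𝓝 L))
    (hL' : Tendsto (fun N : ℕ => f' N) atTop (𝓝 0))
    (hB : ∀ N : ℕ, a ≤ N → ∫ t in (a : ℝ)..N, |f''' t| ≤ B) :
    |D - ((f a + L) / 2 - f' a / 12)| ≤ B / 48 := by
  have hlim : Tendsto (fun N : ℕ => |∑ j ∈ Icc a N, f j - (∫ t in (a : ℝ)..N, f t)
      - ((f a + f N) / 2 + (f' N - f' a) / 12)|) atTop
      (𝓝 |D - ((f a + L) / 2 + (0 - f' a) / 12)|) :=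
    (hD.sub ((((tendsto_const_nhds (x := f a)).add hL).div_const 2).add
      ((hL'.sub (tendsto_const_nhds (x := f' a))).div_const 12))).abs
  have hbound : ∀ᶠ N : ℕ in atTop, |∑ j ∈ Icc a N, f j - (∫ t in (a : ℝ)..N, f t)
      - ((f a + f N) / 2 + (f' N - f' a) / 12)| ≤ B / 48 := by
    filter_upwards [eventually_ge_atTop a] with N hN
    rw [sum_Icc_sub_integral_eq_emKernel hf hf' hf'' hf''' hN, add_sub_cancel_left]
    exact (abs_sum_emKernel_remainder_le hf''' hN).trans (by gcongr; exact hB N hN)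
  have := le_of_tendsto hlim hbound
  rwa [zero_sub, neg_div, ← sub_eq_add_neg] at this

end EulerMaclaurin

theorem exists_tendsto_sum_sub_integral_of_monotoneOn {f : ℝ → ℝ} {a : ℕ} {C : ℝ}
    (hf : MonotoneOn f (Set.Ici (a : ℝ))) (hC : ∀ x ∈ Set.Ici (a : ℝ), f x ≤ C) :
    ∃ D, Tendsto (fun N : ℕ => ∑ j ∈ Icc a N, f j - ∫ t in (a : ℝ)..N, f t)
      atTop (𝓝 D) := by
  set s := fun N : ℕ => ∑ j ∈ Icc a N, f j - ∫ t in (a : ℝ)..N, f t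
  have hmono (b c : ℕ) (hb : a ≤ b) : MonotoneOn f (Set.Icc (b : ℝ) c) :=
    hf.mono fun x hx => le_trans (by exact_mod_cast hb) hx.1
  have hint (b c : ℕ) (hb : a ≤ b) (hbc : b ≤ c) : IntervalIntegrable f volume b c := by
    apply MonotoneOn.intervalIntegrable
    rw [Set.uIcc_of_le (by exact_mod_cast hbc)]
    exact hmono b c hb
  have hsum (N : ℕ) (hN : a ≤ N) : ∑ j ∈ Icc a N, f j = ∑ j ∈ Ico a N, f j + f N := by
    rw [← Finset.Ico_add_one_right_eq_Icc, sum_Ico_succ_top hN]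
  -- monotonicity of `f` gives `f j ≤ ∫_j^{j+1} f ≤ f (j + 1)`
  have hs_mono : Monotone fun k => s (k + a) := by
    refine monotone_nat_of_le_succ fun k => ?_
    have hstep := (hmono (k + a) (k + a + 1) (by omega)).integral_le_sum_Ico (Nat.le_succ _)
    simp only [s, Nat.add_right_comm k 1 a, sum_Icc_succ_top (show a ≤ k + a + 1 by omega),
      Nat.Ico_succ_singleton, sum_singleton] at hstep ⊢
    rw [← intervalIntegral.integral_add_adjacent_intervals (hint a (k + a) le_rfl (by omega))
      (hint (k + a) (k + a + 1) (by omega) (by omega))]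
    push_cast at hstep ⊢
    linarith
  have hs_bdd : BddAbove (Set.range fun k => s (k + a)) := by
    refine ⟨C, Set.forall_mem_range.2 fun k => ?_⟩
    have hle := (hmono a (k + a) le_rfl).sum_le_integral_Ico (Nat.le_add_left a k)
    have hfC := hC (k + a : ℕ) (by simp)
    simp only [s, hsum (k + a) (Nat.le_add_left a k)]
    linarith
  exact ⟨_, (tendsto_add_atTop_iff_nat a).1 (tendsto_atTop_ciSup hs_mono hs_bdd)⟩

theorem integral_pow_mul_one_sub_pow (a b : ℕ) :
    ∫ w in (0 : ℝ)..1, w ^ a * (1 - w) ^ b = a ! * b ! / (a + b + 1)! := by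
  induction b generalizing a with
  | zero => simp [Nat.factorial_succ, field]
  | succ b ih =>
    have hsplit : (fun w : ℝ => w ^ a * (1 - w) ^ (b + 1))
        = fun w => w ^ a * (1 - w) ^ b - w ^ (a + 1) * (1 - w) ^ b := by
      ext w; ring
    rw [hsplit, intervalIntegral.integral_sub (Continuous.intervalIntegrable (by fun_prop) _ _)
      (Continuous.intervalIntegrable (by fun_prop) _ _), ih, ih,
      show a + 1 + b + 1 = (a + b + 1) + 1 by ring, show a + (b + 1) + 1 = (a + b + 1) + 1 by ring]
    push_cast [Nat.factorial_succ]
    field_simp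
    ring

namespace OneSubInvPow

noncomputable def deriv1 (m : ℕ) (x : ℝ) : ℝ := (m + 3) * (1 - 1 / x) ^ (m + 2) * (1 / x) ^ 2

noncomputable def deriv2 (m : ℕ) (x : ℝ) : ℝ :=
  (m + 3) * (m + 2) * (1 - 1 / x) ^ (m + 1) * (1 / x) ^ 4
    - 2 * (m + 3) * (1 - 1 / x) ^ (m + 2) * (1 / x) ^ 3

noncomputable def deriv3 (m : ℕ) (x : ℝ) : ℝ :=
  (m + 3) * (m + 2) * (m + 1) * (1 - 1 / x) ^ m * (1 / x) ^ 6
    - 6 * (m + 3) * (m + 2) * (1 - 1 / x) ^ (m + 1) * (1 / x) ^ 5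
    + 6 * (m + 3) * (1 - 1 / x) ^ (m + 2) * (1 / x) ^ 4

/-- With `w = 1 - 1/x` one has `|deriv3 m x| ≤ majorant m w * (1/x)^2` and `dw = (1/x)^2 dx`. -/
noncomputable def majorant (m : ℕ) (w : ℝ) : ℝ :=
  (m + 3) * (m + 2) * (m + 1) * w ^ m * (1 - w) ^ 4
    + 6 * (m + 3) * (m + 2) * w ^ (m + 1) * (1 - w) ^ 3 + 6 * (m + 3) * w ^ (m + 2) * (1 - w) ^ 2

variable {m : ℕ} {x : ℝ}

lemma one_sub_one_div_nonneg (hx : 1 ≤ x) : 0 ≤ 1 - 1 / x := by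
  rw [sub_nonneg, div_le_one (by linarith)]; exact hx

lemma monotoneOn_pow (n : ℕ) : MonotoneOn (fun x : ℝ => (1 - 1 / x) ^ n) (Set.Ici 1) :=
  fun _ hx _ _ hxy => pow_le_pow_left₀ (one_sub_one_div_nonneg hx)
    (sub_le_sub_left (one_div_le_one_div_of_le (zero_lt_one.trans_le hx) hxy) 1) n

lemma pow_le_one (n : ℕ) (hx : 1 ≤ x) : (1 - 1 / x) ^ n ≤ 1 :=
  pow_le_one₀ (one_sub_one_div_nonneg hx) (sub_le_self 1 (by positivity))

lemma tendsto_one_sub_one_div : Tendsto (fun N : ℕ => 1 - 1 / (N : ℝ)) atTop (𝓝 1) := by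
  simpa using tendsto_one_div_atTop_nhds_zero_nat.const_sub (1 : ℝ)

lemma tendsto_deriv1 : Tendsto (fun N : ℕ => deriv1 m N) atTop (𝓝 0) := by
  simpa [deriv1] using ((tendsto_one_sub_one_div.pow (m + 2)).const_mul ((m : ℝ) + 3)).mul
    (tendsto_one_div_atTop_nhds_zero_nat.pow 2)

lemma hasDerivAt_one_div (hx : x ≠ 0) : HasDerivAt (fun y : ℝ => 1 / y) (-(1 / x) ^ 2) x := by
  simpa [one_div, inv_pow] using hasDerivAt_inv hx

lemma hasDerivAt_one_sub_one_div (hx : x ≠ 0) :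
    HasDerivAt (fun y : ℝ => 1 - 1 / y) ((1 / x) ^ 2) x := by
  simpa using (hasDerivAt_one_div hx).const_sub 1

lemma hasDerivAt_pow (hx : x ≠ 0) :
    HasDerivAt (fun y : ℝ => (1 - 1 / y) ^ (m + 3)) (deriv1 m x) x := by
  refine ((hasDerivAt_one_sub_one_div hx).pow (m + 3)).congr_deriv ?_
  simp only [deriv1]; push_cast; ring

lemma hasDerivAt_deriv1 (hx : x ≠ 0) : HasDerivAt (deriv1 m) (deriv2 m x) x := by
  refine ((((hasDerivAt_one_sub_one_div hx).pow (m + 2)).const_mul ((m : ℝ) + 3)).mul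
    ((hasDerivAt_one_div hx).pow 2)).congr_deriv ?_
  simp only [deriv2, Pi.pow_apply]; push_cast; ring

lemma hasDerivAt_deriv2 (hx : x ≠ 0) : HasDerivAt (deriv2 m) (deriv3 m x) x := by
  refine (((((hasDerivAt_one_sub_one_div hx).pow (m + 1)).const_mul
    (((m : ℝ) + 3) * (m + 2))).mul ((hasDerivAt_one_div hx).pow 4)).sub
    ((((hasDerivAt_one_sub_one_div hx).pow (m + 2)).const_mul (2 * ((m : ℝ) + 3))).mul
    ((hasDerivAt_one_div hx).pow 3))).congr_deriv ?_
  simp only [deriv3, Pi.pow_apply]; push_cast; ring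

lemma continuousOn_deriv3 : ContinuousOn (deriv3 m) (Set.Ici 1) := by
  have : ∀ x ∈ Set.Ici (1 : ℝ), x ≠ 0 := fun x hx => (zero_lt_one.trans_le hx).ne'
  unfold deriv3
  fun_prop (disch := assumption)

lemma abs_deriv3_le (hx : 1 ≤ x) : |deriv3 m x| ≤ majorant m (1 - 1 / x) * (1 / x) ^ 2 := by
  have hw := one_sub_one_div_nonneg hx
  have hv : 0 ≤ 1 / x := by positivity
  have h₁ : 0 ≤ (m + 3) * (m + 2) * (m + 1) * (1 - 1 / x) ^ m * (1 / x) ^ 6 := by positivity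
  have h₂ : 0 ≤ 6 * (m + 3) * (m + 2) * (1 - 1 / x) ^ (m + 1) * (1 / x) ^ 5 := by positivity
  have h₃ : 0 ≤ 6 * (m + 3) * (1 - 1 / x) ^ (m + 2) * (1 / x) ^ 4 := by positivity
  rw [majorant, sub_sub_cancel, abs_le, deriv3]
  constructor <;> linarith

lemma integral_majorant : ∫ w in (0 : ℝ)..1, majorant m w = 72 / ((m + 4) * (m + 5)) := by
  have hsplit : majorant m = fun w : ℝ =>
      (((m : ℝ) + 3) * (m + 2) * (m + 1)) * (w ^ m * (1 - w) ^ 4)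
      + (6 * (m + 3) * (m + 2)) * (w ^ (m + 1) * (1 - w) ^ 3)
      + (6 * (m + 3)) * (w ^ (m + 2) * (1 - w) ^ 2) := by
    ext w; simp only [majorant]; ring
  have hint (a b : ℕ) (c : ℝ) : IntervalIntegrable (fun w : ℝ => c * (w ^ a * (1 - w) ^ b))
      volume 0 1 := (Continuous.intervalIntegrable (by fun_prop) _ _)
  rw [hsplit, intervalIntegral.integral_add ((hint _ _ _).add (hint _ _ _)) (hint _ _ _),
    intervalIntegral.integral_add (hint _ _ _) (hint _ _ _), intervalIntegral.integral_const_mul,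
    intervalIntegral.integral_const_mul, intervalIntegral.integral_const_mul,
    integral_pow_mul_one_sub_pow, integral_pow_mul_one_sub_pow, integral_pow_mul_one_sub_pow,
    show m + 4 + 1 = m + 1 + 1 + 1 + 1 + 1 by ring,
    show m + 1 + 3 + 1 = m + 1 + 1 + 1 + 1 + 1 by ring,
    show m + 2 + 2 + 1 = m + 1 + 1 + 1 + 1 + 1 by ring]
  push_cast [Nat.factorial_succ]
  field_simp
  ring

lemma integral_abs_deriv3_le {X : ℝ} (hX : 1 ≤ X) :
    ∫ t in (1 : ℝ)..X, |deriv3 m t| ≤ 72 / ((m + 4) * (m + 5)) := by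
  have hsub : Set.uIcc 1 X ⊆ Set.Ici (1 : ℝ) := by
    rw [Set.uIcc_of_le hX]; exact Set.Icc_subset_Ici_self
  have hne : ∀ t ∈ Set.uIcc 1 X, t ≠ 0 := fun t ht => (zero_lt_one.trans_le (hsub ht)).ne'
  have hcont : ContinuousOn (fun t => majorant m (1 - 1 / t) * (1 / t) ^ 2) (Set.uIcc 1 X) := by
    unfold majorant; fun_prop (disch := assumption)
  have hw := one_sub_one_div_nonneg hX
  have hw' : 1 - 1 / X ≤ 1 := sub_le_self 1 (by positivity)
  calc ∫ t in (1 : ℝ)..X, |deriv3 m t|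
      ≤ ∫ t in (1 : ℝ)..X, majorant m (1 - 1 / t) * (1 / t) ^ 2 := by
        refine intervalIntegral.integral_mono_on hX ?_ hcont.intervalIntegrable
          fun t ht => abs_deriv3_le ht.1
        exact (continuousOn_deriv3.mono hsub).abs.intervalIntegrable
    _ = ∫ w in (0 : ℝ)..1 - 1 / X, majorant m w := by
        have := intervalIntegral.integral_comp_mul_deriv (g := majorant m)
          (fun t ht => hasDerivAt_one_sub_one_div (hne t ht)) (by fun_prop (disch := assumption))
          (by unfold majorant; fun_prop)
        simpa using this
    _ ≤ ∫ w in (0 : ℝ)..1, majorant m w := by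
        refine intervalIntegral.integral_mono_interval le_rfl hw hw' ?_
          (Continuous.intervalIntegrable (by unfold majorant; fun_prop) _ _)
        refine (ae_restrict_iff' measurableSet_Ioc).2 (ae_of_all _ fun w hw₀₁ => ?_)
        have : 0 ≤ 1 - w := by linarith [hw₀₁.2]
        have : 0 ≤ w := hw₀₁.1.le
        unfold majorant; positivity
    _ = 72 / ((m + 4) * (m + 5)) := integral_majorant

end OneSubInvPow

open OneSubInvPow in
theorem abs_limit_sum_sub_integral_sub_half_le {m : ℕ} {D : ℝ}
    (hD : Tendsto (fun N : ℕ => ∑ j ∈ Icc 1 N, (1 - 1 / (j : ℝ)) ^ (m + 3)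
      - ∫ t in (1 : ℝ)..N, (1 - 1 / t) ^ (m + 3)) atTop (𝓝 D)) :
    |D - 1 / 2| ≤ 3 / (2 * ((m + 4) * (m + 5))) := by
  have hne {t : ℝ} (ht : t ∈ Set.Ici ((1 : ℕ) : ℝ)) : t ≠ 0 :=
    (zero_lt_one.trans_le (by simpa using ht)).ne'
  have h := abs_sub_le_of_tendsto_sum_sub_integral (a := 1)
    (fun t ht => hasDerivAt_pow (m := m) (hne ht)) (fun t ht => hasDerivAt_deriv1 (hne ht))
    (fun t ht => hasDerivAt_deriv2 (hne ht)) (by simpa using continuousOn_deriv3)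
    (by simpa using hD) (by simpa using tendsto_one_sub_one_div.pow (m + 3)) tendsto_deriv1
    (fun N hN => by simpa using integral_abs_deriv3_le (m := m) (by exact_mod_cast hN))
  norm_num [deriv1] at h
  exact h.trans_eq (by field_simp; ring)

/-- For `n ≥ 1` let
`D n = lim_{N→∞} [∑_{j=1}^N (1 - 1/j)^n - ∫_1^N (1 - 1/x)^n dx]`.  This limit
exists for every `n`, and `D n = 1/2 + o(1/n)`, i.e. `n (D n - 1/2) → 0`. -/
theorem stmt_18 :
    ∃ D : ℕ → ℝ,
      (∀ n : ℕ, 1 ≤ n →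
        Tendsto (fun N : ℕ =>
            (∑ j ∈ Icc 1 N, (1 - 1 / (j : ℝ)) ^ n)
              - ∫ x in Set.Icc (1 : ℝ) (N : ℝ), (1 - 1 / x) ^ n)
          atTop (𝓝 (D n))) ∧
      Tendsto (fun n : ℕ => (n : ℝ) * (D n - 1 / 2)) atTop (𝓝 0) := by
  choose D hD using fun n => exists_tendsto_sum_sub_integral_of_monotoneOn (a := 1)
    (by simpa using OneSubInvPow.monotoneOn_pow n)
    (by simpa using fun x hx => OneSubInvPow.pow_le_one n hx)
  refine ⟨D, fun n _ => (hD n).congr' ?_, ?_⟩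
  · filter_upwards [eventually_ge_atTop 1] with N hN
    rw [integral_Icc_eq_integral_Ioc, ← intervalIntegral.integral_of_le (by exact_mod_cast hN)]
    simp
  · refine squeeze_zero_norm' ?_ (tendsto_const_div_atTop_nhds_zero_nat 2)
    filter_upwards [eventually_ge_atTop 3] with n hn
    obtain ⟨m, rfl⟩ : ∃ m, n = m + 3 := ⟨n - 3, by omega⟩
    rw [norm_mul, Real.norm_of_nonneg (by positivity)]
    push_cast
    calc ((m : ℝ) + 3) * |D (m + 3) - 1 / 2| ≤ (m + 3) * (3 / (2 * ((m + 4) * (m + 5)))) := by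
          gcongr; exact abs_limit_sum_sub_integral_sub_half_le (by simpa using hD (m + 3))
      _ ≤ 2 / (m + 3) := by
          rw [mul_div_assoc', div_le_div_iff₀ (by positivity) (by positivity)]
          nlinarith
end
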